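/- arXiv:2511.01563 — 7 statements merged into one kernel-verified Lean document; each statement's English description precedes it below -/
import Mathlib

section
/- Let m ≥ 1 and a, b ∈ ℝ^m with Σ_{i=1}^m a_i² b_i² = 1 (unit Euclidean speed), and define the curve γ: ℝ → ℝ^{2m} by γ(t) = (a₁cos(b₁t), a₁sin(b₁t), …, a_m cos(b_m t), a_m sin(b_m t)). Suppose t_L > 0 satisfies γ(t_L) = γ(0). Let b_min = min{ |b_i| : 1 ≤ i ≤ m, a_i b_i ≠ 0 } (this set is nonempty by the unit-speed condition) and let κ = √(Σ_{i=1}^m a_i² b_i⁴), which is the constant Euclidean norm of the second derivative γ̈. Then t_L ≥ 2π / b_min ≥ 2π / κ. -/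
/-- For a unit Euclidean speed loop of constant Frenet curvatures in `ℝ^{2m}`, in the normal form
`γ(t) = (a₁cos(b₁t), a₁sin(b₁t), …, a_m cos(b_m t), a_m sin(b_m t))`, any return time `t_L > 0`
satisfies `t_L ≥ 2π / b_min ≥ 2π / ‖γ̈‖`, where `b_min` is the smallest `|b_i|` among indices with
`a_i b_i ≠ 0` and `‖γ̈‖ = √(Σ a_i² b_i⁴)` is the constant Euclidean norm of the second
derivative. -/
theorem loop_length_lower_bound (m : ℕ) (hm : 1 ≤ m) (a b : Fin m → ℝ)
    (hunit : ∑ i, (a i) ^ 2 * (b i) ^ 2 = 1)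
    (γ : ℝ → Fin m → ℝ × ℝ)
    (hγ : ∀ t i, γ t i = (a i * Real.cos (b i * t), a i * Real.sin (b i * t)))
    (t_L : ℝ) (ht : 0 < t_L) (hloop : γ t_L = γ 0) :
    t_L ≥ 2 * Real.pi / sInf {x : ℝ | ∃ i, a i * b i ≠ 0 ∧ x = |b i|} ∧
    2 * Real.pi / sInf {x : ℝ | ∃ i, a i * b i ≠ 0 ∧ x = |b i|} ≥
      2 * Real.pi / Real.sqrt (∑ i, (a i) ^ 2 * (b i) ^ 4) := by
  set S : Set ℝ := {x : ℝ | ∃ i, a i * b i ≠ 0 ∧ x = |b i|} with hS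
  -- S is nonempty
  have hne : S.Nonempty := by
    by_contra h
    rw [Set.not_nonempty_iff_eq_empty] at h
    have hz : ∀ i, a i * b i = 0 := by
      intro i
      by_contra hi
      have : |b i| ∈ S := ⟨i, hi, rfl⟩
      simp [h] at this
    have : (∑ i, (a i) ^ 2 * (b i) ^ 2) = 0 := by
      apply Finset.sum_eq_zero
      intro i _
      have := hz i
      nlinarith [hz i]
    rw [hunit] at this
    norm_num at this
  -- S is finite
  have hfin : S.Finite := by
    have : S ⊆ (fun i => |b i|) '' Set.univ := by
      rintro x ⟨i, hi, rfl⟩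
      exact ⟨i, trivial, rfl⟩
    exact Set.Finite.subset (Set.finite_range _ |>.subset (by rintro x ⟨i, _, rfl⟩; exact ⟨i, rfl⟩)) this
  -- the infimum is attained
  obtain ⟨j, hj, hjm⟩ : ∃ j, a j * b j ≠ 0 ∧ sInf S = |b j| := hne.csInf_mem hfin
  have haj : a j ≠ 0 := fun h => hj (by simp [h])
  have hbj : b j ≠ 0 := fun h => hj (by simp [h])
  have hbjpos : 0 < |b j| := abs_pos.mpr hbj
  -- from the loop condition
  have hcos : Real.cos (b j * t_L) = 1 := by
    have h1 := congrFun hloop j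
    rw [hγ, hγ] at h1
    have h2 : a j * Real.cos (b j * t_L) = a j * Real.cos (b j * 0) := congrArg Prod.fst h1
    rw [mul_zero, Real.cos_zero] at h2
    exact mul_left_cancel₀ haj h2
  obtain ⟨n, hn⟩ := (Real.cos_eq_one_iff _).mp hcos
  have hnne : n ≠ 0 := by
    rintro rfl
    have h0 : b j * t_L = 0 := by simpa using hn.symm
    rcases mul_eq_zero.mp h0 with h | h
    · exact hbj h
    · exact ht.ne' h
  have hpi := Real.pi_pos
  -- |b j| * t_L = |n| * 2π ≥ 2π
  have habs : |b j| * t_L = |(n : ℝ)| * (2 * Real.pi) := by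
    have h := congrArg abs hn
    simp only [abs_mul, abs_two, abs_of_pos ht, abs_of_pos hpi] at h
    linarith
  have hn1 : (1 : ℝ) ≤ |(n : ℝ)| := by
    rw [← Int.cast_abs]
    exact_mod_cast Int.one_le_abs hnne
  have hkey : 2 * Real.pi ≤ |b j| * t_L := by
    rw [habs]; nlinarith
  have h1 : t_L ≥ 2 * Real.pi / sInf S := by
    rw [hjm, ge_iff_le, div_le_iff₀ hbjpos]
    linarith [hkey]
  refine ⟨h1, ?_⟩
  -- second inequality: sInf S ≤ κ
  have hSle : ∀ i, a i * b i ≠ 0 → sInf S ≤ |b i| := fun i hi =>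
    csInf_le hfin.bddBelow ⟨i, hi, rfl⟩
  have hs0 : 0 < sInf S := hjm ▸ hbjpos
  have hsq : (sInf S) ^ 2 ≤ ∑ i, (a i) ^ 2 * (b i) ^ 4 := by
    calc (sInf S) ^ 2 = ∑ i, (sInf S) ^ 2 * ((a i) ^ 2 * (b i) ^ 2) := by
          rw [← Finset.mul_sum, hunit, mul_one]
      _ ≤ ∑ i, (a i) ^ 2 * (b i) ^ 4 := by
          apply Finset.sum_le_sum
          intro i _
          by_cases hi : a i * b i = 0
          · have : (a i) ^ 2 * (b i) ^ 2 = 0 := by nlinarith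
            have h4 : (a i) ^ 2 * (b i) ^ 4 = 0 := by nlinarith
            rw [this, h4, mul_zero]
          · have h1 := hSle i hi
            have h2 : (sInf S) ^ 2 ≤ (b i) ^ 2 := by
              have := sq_abs (b i)
              nlinarith [hs0.le, abs_nonneg (b i)]
            nlinarith [sq_nonneg (a i * b i)]
  have hs : sInf S ≤ Real.sqrt (∑ i, (a i) ^ 2 * (b i) ^ 4) := by
    rw [show (sInf S) = Real.sqrt ((sInf S) ^ 2) from (Real.sqrt_sq hs0.le).symm]
    exact Real.sqrt_le_sqrt hsq
  exact div_le_div_of_nonneg_left (by positivity) hs0 hs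
end

section
/- Let β > 0, let n, p be integers with 2 ≤ p ≤ n−1, and let A ∈ Skew(p) and B ∈ ℝ^{(n−p)×p} satisfy ‖A‖_F² + ‖B‖_F² = 1. Then ‖AᵀA + BᵀB‖_F² + (2−2β)²·‖BA‖_F² ≤ 1 + (1−4β+2β²)·‖B‖_F²·‖A‖_F² − (1/2)·‖A‖_F⁴. (The left-hand side equals the squared Euclidean norm ‖γ̈_β(t)‖² of the second derivative of the β-geodesic γ_β determined by (A,B), for every t.) -/
open Matrix

/-- The squared Frobenius norm of a real matrix. -/
noncomputable def frobSq {m n : Type*} [Fintype m] [Fintype n] (A : Matrix m n ℝ) : ℝ :=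
  ∑ i, ∑ j, (A i j) ^ 2

lemma frobSq_nonneg {m n : Type*} [Fintype m] [Fintype n] (A : Matrix m n ℝ) :
    0 ≤ frobSq A :=
  Finset.sum_nonneg fun _ _ => Finset.sum_nonneg fun _ _ => sq_nonneg _

lemma skew_entry {p : ℕ} (A : Matrix (Fin p) (Fin p) ℝ) (hA : Aᵀ = -A) :
    ∀ i j, A i j = - A j i := by
  intro i j
  have := congrFun (congrFun hA j) i
  simpa using this

/-- Key vector lemma: for skew-symmetric `A`, `2‖Ax‖² ≤ ‖A‖_F²‖x‖²`. -/
lemma key_vec {p : ℕ} (A : Matrix (Fin p) (Fin p) ℝ) (hA : Aᵀ = -A) (x : Fin p → ℝ) :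
    2 * (∑ i, (A.mulVec x i) ^ 2) ≤ frobSq A * ∑ i, (x i) ^ 2 := by
  have hskew := skew_entry A hA
  set y : Fin p → ℝ := A.mulVec x with hy
  have hyi : ∀ i, y i = ∑ j, A i j * x j := fun i => rfl
  set u : Fin p → ℝ := A.mulVec y with hu
  have hui : ∀ i, u i = ∑ j, A i j * y j := fun i => rfl
  set q := ∑ i, (y i) ^ 2 with hqdef
  set s := ∑ i, (x i) ^ 2 with hsdef
  set F := frobSq A with hFdef
  set U := ∑ i, (u i) ^ 2 with hUdef
  have hFsum : F = ∑ i, ∑ j, (A i j) ^ 2 := rfl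
  have hq0 : 0 ≤ q := Finset.sum_nonneg fun _ _ => sq_nonneg _
  have hs0 : 0 ≤ s := Finset.sum_nonneg fun _ _ => sq_nonneg _
  have hU0 : 0 ≤ U := Finset.sum_nonneg fun _ _ => sq_nonneg _
  have hF0 : 0 ≤ F := frobSq_nonneg A
  rcases eq_or_lt_of_le hq0 with hq | hq
  · have := mul_nonneg hF0 hs0
    linarith
  have hs : 0 < s := by
    rcases eq_or_lt_of_le hs0 with h0 | h0
    · exfalso
      have hx : ∀ i, x i = 0 := by
        intro i
        have h1 : (x i) ^ 2 ≤ s :=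
          Finset.single_le_sum (fun j _ => sq_nonneg (x j)) (Finset.mem_univ i)
        nlinarith [sq_nonneg (x i)]
      have hy0 : ∀ i, y i = 0 := by
        intro i; rw [hyi]
        apply Finset.sum_eq_zero; intro j _; rw [hx j]; ring
      have hq' : q = 0 := by
        rw [hqdef]; apply Finset.sum_eq_zero; intro i _; rw [hy0 i]; ring
      linarith
    · exact h0
  -- ⟨x, y⟩ = 0 by skewness
  have hxy : (∑ i, x i * y i) = 0 := by
    have e : (∑ i, x i * y i) = ∑ i, ∑ j, x i * A i j * x j := by
      refine Finset.sum_congr rfl fun i _ => ?_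
      rw [hyi, Finset.mul_sum]
      exact Finset.sum_congr rfl fun j _ => by ring
    have e2 : (∑ i, ∑ j, x i * A i j * x j) = - ∑ i, ∑ j, x i * A i j * x j := by
      conv_lhs => rw [Finset.sum_comm]
      calc (∑ j, ∑ i, x i * A i j * x j)
          = ∑ j, ∑ i, -(x j * A j i * x i) := by
            refine Finset.sum_congr rfl fun j _ => Finset.sum_congr rfl fun i _ => ?_
            rw [hskew i j]; ring
        _ = - ∑ j, ∑ i, x j * A j i * x i := by
            simp [Finset.sum_neg_distrib]
    rw [e]; linarith [e2]
  -- ⟨x, u⟩ = -q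
  have hxu : (∑ i, x i * u i) = - q := by
    have e : (∑ i, x i * u i) = ∑ i, ∑ j, x i * A i j * y j := by
      refine Finset.sum_congr rfl fun i _ => ?_
      rw [hui, Finset.mul_sum]
      exact Finset.sum_congr rfl fun j _ => by ring
    rw [e, Finset.sum_comm, hqdef, ← Finset.sum_neg_distrib]
    refine Finset.sum_congr rfl fun j _ => ?_
    calc (∑ i, x i * A i j * y j) = (∑ i, -(A j i * x i)) * y j := by
          rw [Finset.sum_mul]
          refine Finset.sum_congr rfl fun i _ => ?_
          rw [hskew i j]; ring
      _ = (-(y j)) * y j := by rw [Finset.sum_neg_distrib, ← hyi j]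
      _ = -(y j ^ 2) := by ring
  -- Cauchy–Schwarz: q² ≤ s·U
  have hcs : q ^ 2 ≤ s * U := by
    have h := Finset.sum_mul_sq_le_sq_mul_sq Finset.univ x u
    rw [hxu, neg_sq] at h
    exact h
  -- Bessel-type inequality summed over rows
  have hrow : ∀ i : Fin p,
      q ^ 2 * s ^ 2 * (∑ j, (A i j) ^ 2) - q ^ 2 * s * (y i) ^ 2 - q * s ^ 2 * (u i) ^ 2
        = ∑ j, (q * s * A i j - q * (y i) * (x j) - s * (u i) * (y j)) ^ 2 := by
    intro i
    have expand : ∀ j : Fin p,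
        (q * s * A i j - q * (y i) * (x j) - s * (u i) * (y j)) ^ 2
          = q ^ 2 * s ^ 2 * (A i j) ^ 2 + q ^ 2 * (y i) ^ 2 * (x j) ^ 2
            + s ^ 2 * (u i) ^ 2 * (y j) ^ 2
            - 2 * q ^ 2 * s * (y i) * (A i j * x j)
            - 2 * q * s ^ 2 * (u i) * (A i j * y j)
            + 2 * q * s * ((y i) * (u i)) * (x j * y j) := fun j => by ring
    rw [Finset.sum_congr rfl fun j _ => expand j]
    simp only [Finset.sum_add_distrib, Finset.sum_sub_distrib, ← Finset.mul_sum]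
    rw [← hsdef, ← hqdef, ← hyi i, ← hui i, hxy]
    ring
  have hsum : 0 ≤ q ^ 2 * s ^ 2 * F - q ^ 2 * s * q - q * s ^ 2 * U := by
    have h1 : (0:ℝ) ≤ ∑ i, ∑ j, (q * s * A i j - q * (y i) * (x j) - s * (u i) * (y j)) ^ 2 :=
      Finset.sum_nonneg fun _ _ => Finset.sum_nonneg fun _ _ => sq_nonneg _
    have h2 : (∑ i, ∑ j, (q * s * A i j - q * (y i) * (x j) - s * (u i) * (y j)) ^ 2)
        = q ^ 2 * s ^ 2 * F - q ^ 2 * s * q - q * s ^ 2 * U := by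
      rw [Finset.sum_congr rfl fun i _ => (hrow i).symm]
      simp only [Finset.sum_sub_distrib, ← Finset.mul_sum]
      rw [← hqdef, ← hUdef, ← hFsum]
    linarith [h2 ▸ h1]
  have h3 : q * s * q ^ 2 ≤ q * s * (s * U) :=
    mul_le_mul_of_nonneg_left hcs (le_of_lt (mul_pos hq hs))
  nlinarith [mul_pos (mul_pos hq hq) hs, hsum, h3]

/-- For skew `A` and any `C`: `2‖CA‖_F² ≤ ‖C‖_F²‖A‖_F²`. -/
lemma frobSq_mul_le {m p : ℕ} (A : Matrix (Fin p) (Fin p) ℝ) (hA : Aᵀ = -A)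
    (C : Matrix (Fin m) (Fin p) ℝ) : 2 * frobSq (C * A) ≤ frobSq C * frobSq A := by
  have hskew := skew_entry A hA
  have hentry : ∀ i j, (C * A) i j = - ((A.mulVec (C i)) j) := by
    intro i j
    rw [Matrix.mul_apply]
    have hmv : (A.mulVec (C i)) j = ∑ k, A j k * C i k := rfl
    rw [hmv, ← Finset.sum_neg_distrib]
    exact Finset.sum_congr rfl fun k _ => by rw [hskew k j]; ring
  have h1 : frobSq (C * A) = ∑ i, ∑ j, (A.mulVec (C i) j) ^ 2 := by
    unfold frobSq
    exact Finset.sum_congr rfl fun i _ => Finset.sum_congr rfl fun j _ => by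
      rw [hentry i j]; ring
  rw [h1]
  calc 2 * ∑ i, ∑ j, (A.mulVec (C i) j) ^ 2
      = ∑ i, 2 * ∑ j, (A.mulVec (C i) j) ^ 2 := by rw [Finset.mul_sum]
    _ ≤ ∑ i, frobSq A * ∑ j, (C i j) ^ 2 :=
        Finset.sum_le_sum fun i _ => key_vec A hA (C i)
    _ = frobSq A * ∑ i, ∑ j, (C i j) ^ 2 := by rw [Finset.mul_sum]
    _ = frobSq A * frobSq C := rfl
    _ = frobSq C * frobSq A := mul_comm _ _

lemma frobSq_neg {m n : Type*} [Fintype m] [Fintype n] (M : Matrix m n ℝ) :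
    frobSq (-M) = frobSq M := by
  unfold frobSq
  exact Finset.sum_congr rfl fun i _ => Finset.sum_congr rfl fun j _ => by
    rw [Matrix.neg_apply]; ring

lemma frobSq_eq_trace {m n : Type*} [Fintype m] [Fintype n] (M : Matrix m n ℝ) :
    frobSq M = Matrix.trace (Mᵀ * M) := by
  have h : Matrix.trace (Mᵀ * M) = ∑ j, ∑ i, M i j * M i j := by
    refine Finset.sum_congr rfl fun j _ => ?_
    rw [show (Mᵀ * M).diag j = (Mᵀ * M) j j from rfl, Matrix.mul_apply]
    exact Finset.sum_congr rfl fun i _ => by rw [Matrix.transpose_apply]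
  rw [h, Finset.sum_comm]
  exact Finset.sum_congr rfl fun i _ => Finset.sum_congr rfl fun j _ => sq (M i j) ▸ by ring

lemma frobSq_gram_le {m p : ℕ} (B : Matrix (Fin m) (Fin p) ℝ) :
    frobSq (Bᵀ * B) ≤ (frobSq B) ^ 2 := by
  have hcol : frobSq B = ∑ j : Fin p, ∑ k : Fin m, (B k j) ^ 2 := by
    unfold frobSq; exact Finset.sum_comm
  calc frobSq (Bᵀ * B) = ∑ i, ∑ j, (∑ k, B k i * B k j) ^ 2 := by
        unfold frobSq
        refine Finset.sum_congr rfl fun i _ => Finset.sum_congr rfl fun j _ => ?_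
        rw [Matrix.mul_apply]
        congr 1
    _ ≤ ∑ i, ∑ j, (∑ k, (B k i) ^ 2) * (∑ k, (B k j) ^ 2) :=
        Finset.sum_le_sum fun i _ => Finset.sum_le_sum fun j _ =>
          Finset.sum_mul_sq_le_sq_mul_sq _ _ _
    _ = (∑ i : Fin p, ∑ k, (B k i) ^ 2) * (∑ j : Fin p, ∑ k, (B k j) ^ 2) := by
        simp only [← Finset.mul_sum]
        rw [← Finset.sum_mul]
    _ = (frobSq B) ^ 2 := by rw [← hcol]; ring

lemma frobSq_expand {m p : ℕ} (A : Matrix (Fin p) (Fin p) ℝ) (hA : Aᵀ = -A)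
    (B : Matrix (Fin m) (Fin p) ℝ) :
    frobSq (Aᵀ * A + Bᵀ * B)
      = frobSq (Aᵀ * A) + 2 * frobSq (B * A) + frobSq (Bᵀ * B) := by
  have hadd : frobSq (Aᵀ * A + Bᵀ * B)
      = frobSq (Aᵀ * A) + 2 * (∑ i, ∑ j, (Aᵀ * A) i j * (Bᵀ * B) i j)
        + frobSq (Bᵀ * B) := by
    unfold frobSq
    have h : ∀ i : Fin p, (∑ j, ((Aᵀ * A + Bᵀ * B) i j) ^ 2)
        = ∑ j, (((Aᵀ * A) i j) ^ 2 + 2 * ((Aᵀ * A) i j * (Bᵀ * B) i j)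
            + ((Bᵀ * B) i j) ^ 2) := by
      intro i
      refine Finset.sum_congr rfl fun j _ => ?_
      rw [Matrix.add_apply]; ring
    rw [Finset.sum_congr rfl fun i _ => h i]
    simp only [Finset.sum_add_distrib, ← Finset.mul_sum]
  have hAAt : A * Aᵀ = Aᵀ * A := by
    rw [hA, Matrix.mul_neg, Matrix.neg_mul]
  have hYsymm : (Bᵀ * B)ᵀ = Bᵀ * B := by
    rw [Matrix.transpose_mul, Matrix.transpose_transpose]
  -- cross term equals trace ((AᵀA)(BᵀB))
  have e1 : (∑ i, ∑ j, (Aᵀ * A) i j * (Bᵀ * B) i j)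
      = Matrix.trace ((Aᵀ * A) * (Bᵀ * B)) := by
    have htr : Matrix.trace ((Aᵀ * A) * (Bᵀ * B))
        = ∑ i, ∑ j, (Aᵀ * A) i j * (Bᵀ * B) j i := by
      refine Finset.sum_congr rfl fun i _ => ?_
      rw [show ((Aᵀ * A) * (Bᵀ * B)).diag i = ((Aᵀ * A) * (Bᵀ * B)) i i from rfl,
        Matrix.mul_apply]
    rw [htr]
    refine Finset.sum_congr rfl fun i _ => Finset.sum_congr rfl fun j _ => ?_
    have : (Bᵀ * B) j i = (Bᵀ * B) i j := by
      conv_lhs => rw [← hYsymm]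
      rw [Matrix.transpose_apply]
    rw [this]
  have e2 : frobSq (B * A) = Matrix.trace ((Aᵀ * A) * (Bᵀ * B)) := by
    rw [frobSq_eq_trace, Matrix.transpose_mul]
    rw [← Matrix.mul_assoc (Aᵀ * Bᵀ) B A, Matrix.mul_assoc Aᵀ Bᵀ B]
    rw [Matrix.trace_mul_comm (Aᵀ * (Bᵀ * B)) A]
    rw [← Matrix.mul_assoc A Aᵀ (Bᵀ * B), hAAt]
  rw [hadd, e1, ← e2]

/-- Bound on the squared Euclidean norm of the second derivative of a β-geodesic of the Stiefel
manifold `St(n,p)` determined by `(A, B)` with unit Euclidean speed: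
`‖AᵀA + BᵀB‖_F² + (2−2β)²·‖BA‖_F² ≤ 1 + (1−4β+2β²)·‖B‖_F²·‖A‖_F² − (1/2)·‖A‖_F⁴`. -/
theorem second_derivative_norm_bound (β : ℝ) (hβ : 0 < β)
    (n p : ℕ) (hp : 2 ≤ p) (hn : p + 1 ≤ n)
    (A : Matrix (Fin p) (Fin p) ℝ) (B : Matrix (Fin (n - p)) (Fin p) ℝ)
    (hA : Aᵀ = -A) (hnorm : frobSq A + frobSq B = 1) :
    frobSq (Aᵀ * A + Bᵀ * B) + (2 - 2 * β) ^ 2 * frobSq (B * A) ≤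
      1 + (1 - 4 * β + 2 * β ^ 2) * frobSq B * frobSq A - (1 / 2) * (frobSq A) ^ 2 := by
  have h1 := frobSq_expand A hA B
  have h2 : 2 * frobSq (B * A) ≤ frobSq B * frobSq A := frobSq_mul_le A hA B
  have h3 : 2 * frobSq (Aᵀ * A) ≤ frobSq A * frobSq A := by
    have hXneg : Aᵀ * A = -(A * A) := by rw [hA, Matrix.neg_mul]
    rw [hXneg, frobSq_neg]
    exact frobSq_mul_le A hA A
  have h4 : frobSq (Bᵀ * B) ≤ (frobSq B) ^ 2 := frobSq_gram_le B
  have ht0 : 0 ≤ frobSq (B * A) := frobSq_nonneg _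
  have ha0 : 0 ≤ frobSq A := frobSq_nonneg _
  have hb0 : 0 ≤ frobSq B := frobSq_nonneg _
  have hsq : (frobSq A + frobSq B) ^ 2 = 1 := by rw [hnorm]; norm_num
  have hc : (0:ℝ) ≤ (2 - 2 * β) ^ 2 := sq_nonneg _
  have hP : 0 ≤ (2 - 2 * β) ^ 2 * (frobSq B * frobSq A - 2 * frobSq (B * A)) :=
    mul_nonneg hc (by linarith)
  rw [h1]
  nlinarith [hP, h2, h3, h4, hsq]
end

section
/- Let A, B ∈ ℝ^{n×n} be normal matrices whose (complex) spectra are disjoint. Then a real orthogonal matrix M ∈ ℝ^{2n×2n} satisfies M·blockdiag(A, B)·Mᵀ = blockdiag(A, B) if and only if M = blockdiag(M₁, M₂) with M₁ ∈ ig(A) and M₂ ∈ ig(B). Equivalently, ig(blockdiag(A, B)) = blockdiag(ig(A), ig(B)). -/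
/-!
Since `M` is orthogonal, `M D Mᵀ = D` for `D = blockdiag(A, B)` means that `M` commutes with `D`,
so the off-diagonal blocks `X` of `M` satisfy `A X = X B` or `B X = X A`. Such an `X` vanishes
(Sylvester): with `p` the characteristic polynomial of `B` we get `p(A) X = X p(B) = 0`, and
`p(A)` is invertible because its eigenvalues `p(λ)`, `λ` an eigenvalue of `A`, are nonzero when
`A` and `B` share no complex eigenvalue. The diagonal blocks of the block-diagonal `M` are then
orthogonal and preserve `A` and `B`.
-/

open Matrix Polynomial

section Sylvester

variable {K : Type*} [Field K] {m n : Type*} [Fintype m] [Fintype n] [DecidableEq m]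
  [DecidableEq n]

theorem Matrix.pow_mul_eq_mul_pow_of_mul_eq_mul {A : Matrix m m K} {B : Matrix n n K}
    {X : Matrix m n K} (h : A * X = X * B) (k : ℕ) : A ^ k * X = X * B ^ k := by
  induction k with
  | zero => simp
  | succ k ih =>
    rw [pow_succ, pow_succ, Matrix.mul_assoc, h, ← Matrix.mul_assoc, ih, Matrix.mul_assoc]

theorem Matrix.aeval_mul_eq_mul_aeval_of_mul_eq_mul {A : Matrix m m K} {B : Matrix n n K}
    {X : Matrix m n K} (h : A * X = X * B) (p : K[X]) : aeval A p * X = X * aeval B p := by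
  simp only [aeval_eq_sum_range, Matrix.sum_mul, Matrix.mul_sum, smul_mul, Matrix.mul_smul,
    pow_mul_eq_mul_pow_of_mul_eq_mul h]

theorem Matrix.isUnit_aeval_charpoly_of_disjoint_spectrum [IsAlgClosed K] {R : Type*} [Ring R]
    [Algebra K R] {a : R} {B : Matrix n n K} (h : Disjoint (spectrum K a) (spectrum K B)) :
    IsUnit (aeval a B.charpoly) := by
  by_contra hnu
  rw [(IsAlgClosed.splits B.charpoly).eq_prod_roots_of_monic B.charpoly_monic] at hnu
  obtain ⟨k, hka, hkB⟩ := spectrum.exists_mem_of_not_isUnit_aeval_prod hnu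
  exact Set.disjoint_left.mp h hka (mem_spectrum_of_isRoot_charpoly hkB)

theorem Matrix.eq_zero_of_mul_eq_mul_of_disjoint_spectrum [IsAlgClosed K] {A : Matrix m m K}
    {B : Matrix n n K} {X : Matrix m n K} (hAB : Disjoint (spectrum K A) (spectrum K B))
    (h : A * X = X * B) : X = 0 := by
  have hchar := aeval_mul_eq_mul_aeval_of_mul_eq_mul h B.charpoly
  rw [aeval_self_charpoly, Matrix.mul_zero] at hchar
  have hdet := (isUnit_iff_isUnit_det _).mp (isUnit_aeval_charpoly_of_disjoint_spectrum hAB)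
  rw [← nonsing_inv_mul_cancel_left (A := aeval A B.charpoly) X hdet, hchar, Matrix.mul_zero]

theorem Matrix.eq_zero_of_mul_eq_mul_of_disjoint_spectrum_map {L : Type*} [Field L]
    [IsAlgClosed L] [Algebra K L] {A : Matrix m m K} {B : Matrix n n K} {X : Matrix m n K}
    (hAB : Disjoint (spectrum L (A.map (algebraMap K L))) (spectrum L (B.map (algebraMap K L))))
    (h : A * X = X * B) : X = 0 := by
  have hmap : X.map (algebraMap K L) = 0 :=
    eq_zero_of_mul_eq_mul_of_disjoint_spectrum hAB (by simp only [← Matrix.map_mul, h])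
  exact map_injective (algebraMap K L).injective (by simpa using hmap)

end Sylvester

theorem Matrix.isTwoBlockDiagonal_of_commute_fromBlocks {K L : Type*} [Field K] [Field L]
    [IsAlgClosed L] [Algebra K L] {m n : Type*} [Fintype m] [Fintype n] [DecidableEq m]
    [DecidableEq n] {A : Matrix m m K} {B : Matrix n n K}
    (hAB : Disjoint (spectrum L (A.map (algebraMap K L))) (spectrum L (B.map (algebraMap K L))))
    {M : Matrix (m ⊕ n) (m ⊕ n) K} (h : M * fromBlocks A 0 0 B = fromBlocks A 0 0 B * M) :
    M.IsTwoBlockDiagonal := by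
  rw [← fromBlocks_toBlocks M, fromBlocks_multiply, fromBlocks_multiply] at h
  simp only [Matrix.mul_zero, Matrix.zero_mul, add_zero, zero_add, fromBlocks_inj] at h
  exact ⟨eq_zero_of_mul_eq_mul_of_disjoint_spectrum_map hAB h.2.1.symm,
    eq_zero_of_mul_eq_mul_of_disjoint_spectrum_map hAB.symm h.2.2.1.symm⟩

theorem Matrix.fromBlocks_mul_fromBlocks_mul_transpose {R : Type*} [Semiring R] {m n : Type*}
    [Fintype m] [Fintype n] (P A : Matrix m m R) (S B : Matrix n n R) :
    fromBlocks P 0 0 S * fromBlocks A 0 0 B * (fromBlocks P 0 0 S)ᵀ =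
      fromBlocks (P * A * Pᵀ) 0 0 (S * B * Sᵀ) := by
  simp [fromBlocks_transpose, fromBlocks_multiply]

theorem ig_blockdiag_of_disjoint_spectra_general (n : ℕ) (A B : Matrix (Fin n) (Fin n) ℝ)
    (hdisj : Disjoint (spectrum ℂ (A.map (Complex.ofReal : ℝ → ℂ)))
      (spectrum ℂ (B.map (Complex.ofReal : ℝ → ℂ))))
    (M : Matrix (Fin n ⊕ Fin n) (Fin n ⊕ Fin n) ℝ) (hM : Mᵀ * M = 1) :
    M * Matrix.fromBlocks A 0 0 B * Mᵀ = Matrix.fromBlocks A 0 0 B ↔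
      ∃ (M₁ M₂ : Matrix (Fin n) (Fin n) ℝ),
        M₁ᵀ * M₁ = 1 ∧ M₂ᵀ * M₂ = 1 ∧
        M₁ * A * M₁ᵀ = A ∧ M₂ * B * M₂ᵀ = B ∧
        M = Matrix.fromBlocks M₁ 0 0 M₂ := by
  constructor
  · intro h
    have hcomm : M * fromBlocks A 0 0 B = fromBlocks A 0 0 B * M := by
      conv_rhs => rw [← h, Matrix.mul_assoc _ Mᵀ, hM, Matrix.mul_one]
    obtain ⟨h₁₂, h₂₁⟩ := isTwoBlockDiagonal_of_commute_fromBlocks hdisj hcomm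
    obtain ⟨P, S, rfl⟩ : ∃ P S, M = fromBlocks P 0 0 S :=
      ⟨_, _, by conv_lhs => rw [← fromBlocks_toBlocks M, h₁₂, h₂₁]⟩
    rw [fromBlocks_mul_fromBlocks_mul_transpose, fromBlocks_inj] at h
    rw [fromBlocks_transpose, fromBlocks_multiply, ← fromBlocks_one, fromBlocks_inj] at hM
    simp only [Matrix.mul_zero, Matrix.zero_mul, add_zero, zero_add, transpose_zero] at hM
    exact ⟨P, S, hM.1, hM.2.2.2, h.1, h.2.2.2, rfl⟩
  · rintro ⟨M₁, M₂, -, -, h₁, h₂, rfl⟩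
    rw [fromBlocks_mul_fromBlocks_mul_transpose, h₁, h₂]

/-- The invariance group of a block-diagonal matrix built from two real normal matrices with
disjoint complex spectra is the block-diagonal product of the two invariance groups: a real
orthogonal `M` satisfies `M·blockdiag(A, B)·Mᵀ = blockdiag(A, B)` iff `M = blockdiag(M₁, M₂)`
with `M₁ ∈ ig(A)` and `M₂ ∈ ig(B)`. -/
theorem ig_blockdiag_of_disjoint_spectra (n : ℕ) (A B : Matrix (Fin n) (Fin n) ℝ)
    (hA : A * Aᵀ = Aᵀ * A) (hB : B * Bᵀ = Bᵀ * B)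
    (hdisj : Disjoint (spectrum ℂ (A.map (Complex.ofReal : ℝ → ℂ)))
      (spectrum ℂ (B.map (Complex.ofReal : ℝ → ℂ))))
    (M : Matrix (Fin n ⊕ Fin n) (Fin n ⊕ Fin n) ℝ) (hM : Mᵀ * M = 1) :
    M * Matrix.fromBlocks A 0 0 B * Mᵀ = Matrix.fromBlocks A 0 0 B ↔
      ∃ (M₁ M₂ : Matrix (Fin n) (Fin n) ℝ),
        M₁ᵀ * M₁ = 1 ∧ M₂ᵀ * M₂ = 1 ∧
        M₁ * A * M₁ᵀ = A ∧ M₂ * B * M₂ᵀ = B ∧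
        M = Matrix.fromBlocks M₁ 0 0 M₂ :=
  ig_blockdiag_of_disjoint_spectra_general n A B hdisj M hM
end

section
/- Let φ ∈ (−π,π) with φ ≠ 0 and let k be a positive integer. Then exp_m⁻¹(G_{2k}(φ·I_k)) = { M · Ω_{2k}(φ·I_k, K) · Mᵀ : K ∈ ℤ^{k×k} diagonal, M ∈ ℝ^{2k×2k} J_{2k}-orthosymplectic }; that is, a skew-symmetric 2k×2k matrix Ω satisfies exp_m(Ω) = cos(φ)·I_{2k} + sin(φ)·J_{2k} if and only if Ω = M·Ω_{2k}(φ·I_k,K)·Mᵀ for some diagonal integer matrix K and some J_{2k}-orthosymplectic M. -/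
open Matrix

/-- The matrix exponential of a real square matrix. -/
noncomputable def mexp {N : Type*} [Fintype N] [DecidableEq N] (M : Matrix N N ℝ) :
    Matrix N N ℝ :=
  NormedSpace.exp M

/-- `G_p(Φ)`: the `p×p` block-diagonal rotation matrix whose j-th 2×2 diagonal block is the
rotation by the j-th diagonal entry of the diagonal matrix `Φ` (represented by the vector of
its diagonal entries); if `p` is odd, an extra diagonal entry `1` is appended. -/
noncomputable def Gmat (p : ℕ) (Φ : Fin (p / 2) → ℝ) : Matrix (Fin p) (Fin p) ℝ :=
  Matrix.of fun i j =>
    if h : i.val / 2 = j.val / 2 ∧ i.val / 2 < p / 2 then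
      if i.val % 2 = 0 then
        if j.val % 2 = 0 then Real.cos (Φ ⟨i.val / 2, h.2⟩) else -Real.sin (Φ ⟨i.val / 2, h.2⟩)
      else
        if j.val % 2 = 0 then Real.sin (Φ ⟨i.val / 2, h.2⟩) else Real.cos (Φ ⟨i.val / 2, h.2⟩)
    else if i = j then 1 else 0

/-- `Ω_p(Φ, K)`: the `p×p` block-diagonal skew-symmetric matrix whose j-th 2×2 diagonal block is
`(Φ_jj + 2π K_jj) · J₂` where `J₂ = [[0,-1],[1,0]]`; if `p` is odd, an extra diagonal entry `0`
is appended. -/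
noncomputable def Omat (p : ℕ) (Φ : Fin (p / 2) → ℝ) (K : Fin (p / 2) → ℤ) :
    Matrix (Fin p) (Fin p) ℝ :=
  Matrix.of fun i j =>
    if h : i.val / 2 = j.val / 2 ∧ i.val / 2 < p / 2 then
      if i.val % 2 = 0 ∧ j.val % 2 = 1 then
        -(Φ ⟨i.val / 2, h.2⟩ + 2 * Real.pi * (K ⟨i.val / 2, h.2⟩ : ℝ))
      else if i.val % 2 = 1 ∧ j.val % 2 = 0 then
        Φ ⟨i.val / 2, h.2⟩ + 2 * Real.pi * (K ⟨i.val / 2, h.2⟩ : ℝ)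
      else 0
    else 0

/-- `J_{2m}`: the `2m×2m` block-diagonal matrix with `m` copies of `J₂ = [[0,-1],[1,0]]` on the
diagonal. -/
noncomputable def Jmat (m : ℕ) : Matrix (Fin (2 * m)) (Fin (2 * m)) ℝ :=
  Matrix.of fun i j =>
    if i.val = j.val + 1 ∧ j.val % 2 = 0 then 1
    else if j.val = i.val + 1 ∧ i.val % 2 = 0 then -1
    else 0

/-! Identify `ℝ^{2k}` with `ℂ^k`, the pair of coordinates `(2a, 2a+1)` carrying the real and
imaginary part of the `a`-th complex coordinate; then `J_{2k}` is multiplication by `i` and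
`G_{2k}(φ·I_k)` is multiplication by `e^{iφ}`. Since `sin φ ≠ 0`, a skew-symmetric `Ω` with
`exp Ω = cos φ + sin φ · J` commutes with `J`, so it is the realification of a skew-Hermitian
complex matrix `A` with `exp A = e^{iφ}`. Diagonalising `A = U diag(iθ) U*` with `U` unitary, this
says `e^{iθ_a} = e^{iφ}`, i.e. `θ_a ∈ φ + 2πℤ`. Conversely, a `J`-orthosymplectic matrix commutes
with `J`, so it is the realification of a unitary matrix. -/

open Complex ComplexConjugate
open scoped Real

theorem commute_of_commute_smul_one_add_smul {R A : Type*} [Field R] [Ring A] [Algebra R A]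
    {x y : A} {a b : R} (hb : b ≠ 0) (h : Commute x (a • 1 + b • y)) : Commute x y := by
  have hby : Commute x (b • y) := by
    simpa using h.sub_right ((Commute.one_right x).smul_right a)
  simpa [smul_smul, inv_mul_cancel₀ hb] using hby.smul_right b⁻¹

theorem Unitary.conj_eq_smul_one_iff {S A : Type*} [CommSemiring S] [Semiring A] [StarMul A]
    [Algebra S A] (u : unitary A) (x : A) (c : S) :
    u * x * star (u : A) = c • 1 ↔ x = c • 1 := by
  constructor
  · intro h
    calc x = star (u : A) * (u * x * star (u : A)) * u := by
          rw [← mul_assoc, ← mul_assoc, star_mul_self_of_mem u.2, one_mul, mul_assoc,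
            star_mul_self_of_mem u.2, mul_one]
      _ = c • 1 := by rw [h, mul_smul_comm, mul_one, smul_mul_assoc, star_mul_self_of_mem u.2]
  · rintro rfl
    rw [mul_smul_comm, mul_one, smul_mul_assoc, mul_star_self_of_mem u.2]

theorem Matrix.diagonal_eq_smul_one_iff {n α : Type*} [DecidableEq n] [Semiring α]
    (d : n → α) (c : α) : diagonal d = c • 1 ↔ ∀ a, d a = c := by
  rw [smul_one_eq_diagonal, diagonal_injective.eq_iff, funext_iff]

theorem Complex.leftMulMatrix_conj (z : ℂ) :
    Algebra.leftMulMatrix basisOneI (conj z) = (Algebra.leftMulMatrix basisOneI z)ᵀ := by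
  ext i j
  fin_cases i <;> fin_cases j <;> simp [Algebra.leftMulMatrix_complex]

theorem Complex.exists_leftMulMatrix_eq_of_commute {B : Matrix (Fin 2) (Fin 2) ℝ}
    (hB : Commute B (Algebra.leftMulMatrix basisOneI I)) :
    ∃ z, Algebra.leftMulMatrix basisOneI z = B := by
  obtain ⟨p, q, r, s, rfl⟩ : ∃ p q r s, B = !![p, q; r, s] := ⟨_, _, _, _, B.eta_fin_two⟩
  have h := hB.eq
  simp only [Algebra.leftMulMatrix_complex, I_re, I_im, mul_fin_two, mul_zero, mul_one, zero_mul,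
    one_mul, neg_mul, zero_add, add_zero, EmbeddingLike.apply_eq_iff_eq, vecCons_inj, and_true] at h
  obtain ⟨⟨rfl, -⟩, rfl, -⟩ := h
  exact ⟨⟨s, r⟩, by rw [Algebra.leftMulMatrix_complex]⟩

theorem Complex.exp_ofReal_mul_I_eq_iff {θ φ : ℝ} :
    exp (θ * I) = exp (φ * I) ↔ ∃ K : ℤ, θ = φ + 2 * π * K := by
  rw [← Circle.coe_exp, ← Circle.coe_exp, Circle.coe_inj, Circle.exp_eq_exp]
  simp only [mul_comm (2 * π)]

theorem Matrix.commute_of_transpose_mul_self_eq_one {n R : Type*} [Fintype n] [DecidableEq n]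
    [CommRing R] {M J : Matrix n n R} (hM : Mᵀ * M = 1) (hMJ : M * J * Mᵀ = J) : Commute M J :=
  calc M * J = M * J * (Mᵀ * M) := by rw [hM, mul_one]
    _ = J * M := by rw [← mul_assoc, hMJ]

namespace Matrix

section Realify

variable {n m : Type*} [Fintype n] [DecidableEq n] [Fintype m] [DecidableEq m]
variable (e : n × Fin 2 ≃ m)

/-- The entry `z` at `(a, c)` becomes the block `!![z.re, -z.im; z.im, z.re]` on the rows
`e (a, ·)` and columns `e (c, ·)`. -/
noncomputable def realify : Matrix n n ℂ →ₐ[ℝ] Matrix m m ℝ :=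
  ((compAlgEquiv n (Fin 2) ℝ ℝ).trans (reindexAlgEquiv ℝ ℝ e)).toAlgHom.comp
    (Algebra.leftMulMatrix basisOneI).mapMatrix

theorem realify_apply (A : Matrix n n ℂ) (a c : n) (b d : Fin 2) :
    realify e A (e (a, b)) (e (c, d)) = Algebra.leftMulMatrix basisOneI (A a c) b d := by
  simp [realify]

theorem eq_realify_iff (X : Matrix m m ℝ) (A : Matrix n n ℂ) :
    X = realify e A ↔ ∀ a c b d,
      X (e (a, b)) (e (c, d)) = !![(A a c).re, -(A a c).im; (A a c).im, (A a c).re] b d := by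
  refine ⟨fun h a c b d => by rw [h, realify_apply, Algebra.leftMulMatrix_complex], fun h => ?_⟩
  ext i j
  obtain ⟨⟨a, b⟩, rfl⟩ := e.surjective i
  obtain ⟨⟨c, d⟩, rfl⟩ := e.surjective j
  rw [h, realify_apply, Algebra.leftMulMatrix_complex]

theorem realify_injective : Function.Injective (realify e) := by
  intro A B h
  ext a c
  refine Algebra.leftMulMatrix_injective basisOneI (Matrix.ext fun b d => ?_)
  rw [← realify_apply e, ← realify_apply e, h]

theorem realify_conjTranspose (A : Matrix n n ℂ) : realify e Aᴴ = (realify e A)ᵀ := by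
  ext i j
  obtain ⟨⟨a, b⟩, rfl⟩ := e.surjective i
  obtain ⟨⟨c, d⟩, rfl⟩ := e.surjective j
  simp [transpose_apply, realify_apply, conjTranspose_apply, Complex.leftMulMatrix_conj]

theorem realify_mul_mul_transpose (A B : Matrix n n ℂ) :
    realify e A * realify e B * (realify e A)ᵀ = realify e (A * B * star A) := by
  rw [star_eq_conjTranspose, map_mul, map_mul, realify_conjTranspose]

theorem realify_transpose_mul_self_eq_one_iff (A : Matrix n n ℂ) :
    (realify e A)ᵀ * realify e A = 1 ↔ A ∈ unitaryGroup n ℂ := by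
  rw [mem_unitaryGroup_iff', ← realify_conjTranspose, ← map_mul, ← map_one (realify e),
    (realify_injective e).eq_iff, star_eq_conjTranspose]

theorem continuous_realify : Continuous (realify e) :=
  (realify e).toLinearMap.continuous_of_finiteDimensional

attribute [local instance] Matrix.linftyOpNormedRing Matrix.linftyOpNormedAlgebra in
theorem realify_exp (A : Matrix n n ℂ) :
    realify e (NormedSpace.exp A) = NormedSpace.exp (realify e A) :=
  letI : NormedAlgebra ℚ (Matrix n n ℂ) := NormedAlgebra.restrictScalars ℚ ℂ _
  NormedSpace.map_exp (realify e) (continuous_realify e) A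

theorem exists_realify_eq_of_commute {X : Matrix m m ℝ}
    (hX : Commute X (realify e (I • 1))) : ∃ A, realify e A = X := by
  set Φ := (compAlgEquiv n (Fin 2) ℝ ℝ).trans (reindexAlgEquiv ℝ ℝ e)
  obtain ⟨B, rfl⟩ := Φ.surjective X
  have hJ : realify e (I • 1) = Φ (diagonal fun _ => Algebra.leftMulMatrix basisOneI I) := by
    simp [realify, Φ, smul_one_eq_diagonal]
  have hcomm : B * diagonal (fun _ => Algebra.leftMulMatrix basisOneI I) =
      diagonal (fun _ => Algebra.leftMulMatrix basisOneI I) * B := by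
    apply Φ.injective
    rw [map_mul, map_mul, ← hJ]
    exact hX.eq
  have hblock : ∀ a c, Commute (B a c) (Algebra.leftMulMatrix basisOneI I) := fun a c => by
    simpa [Commute, SemiconjBy] using congrFun (congrFun hcomm a) c
  choose z hz using fun a c => Complex.exists_leftMulMatrix_eq_of_commute (hblock a c)
  exact ⟨of z, congrArg Φ (Matrix.ext fun a c => hz a c)⟩

end Realify

section UnitaryDiagonal

variable {n : Type*} [Fintype n] [DecidableEq n]

theorem exists_unitary_diagonal_of_conjTranspose_eq_neg {A : Matrix n n ℂ} (hA : Aᴴ = -A) :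
    ∃ (u : unitary (Matrix n n ℂ)) (θ : n → ℝ),
      A = u * diagonal (fun a => (θ a : ℂ) * I) * star (u : Matrix n n ℂ) := by
  have hH : ((-I) • A).IsHermitian := by
    rw [IsHermitian, conjTranspose_smul, hA, star_neg, Complex.star_def, conj_I, neg_neg,
      smul_neg, neg_smul]
  obtain ⟨u, θ, hspec⟩ : ∃ (u : unitary (Matrix n n ℂ)) (θ : n → ℝ),
      (-I) • A = u * diagonal (fun a => (θ a : ℂ)) * star (u : Matrix n n ℂ) :=
    ⟨_, _, hH.spectral_theorem⟩
  have hdiag : diagonal (fun a => (θ a : ℂ) * I) = I • diagonal fun a => (θ a : ℂ) := by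
    rw [← diagonal_smul]
    simp only [Pi.smul_def, smul_eq_mul, mul_comm I]
  refine ⟨u, θ, ?_⟩
  calc A = I • ((-I) • A) := by rw [smul_smul, mul_neg, I_mul_I, neg_neg, one_smul]
    _ = _ := by rw [hspec, hdiag, Matrix.mul_smul, Matrix.smul_mul]

theorem exp_unitary_conj {𝔸 : Type*} [NormedCommRing 𝔸] [NormedAlgebra ℚ 𝔸] [CompleteSpace 𝔸]
    [StarRing 𝔸] (u : unitary (Matrix n n 𝔸)) (X : Matrix n n 𝔸) :
    NormedSpace.exp (u * X * star (u : Matrix n n 𝔸)) =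
      u * NormedSpace.exp X * star (u : Matrix n n 𝔸) := by
  have hu : IsUnit (u : Matrix n n 𝔸) := (Unitary.toUnits u).isUnit
  rw [← inv_eq_right_inv (Unitary.mul_star_self_of_mem u.2), exp_conj _ _ hu]

theorem exp_unitary_conj_diagonal_eq_iff (u : unitary (Matrix n n ℂ)) (θ : n → ℝ) (φ : ℝ) :
    NormedSpace.exp (u * diagonal (fun a => (θ a : ℂ) * I) * star (u : Matrix n n ℂ)) =
        exp (φ * I) • 1 ↔ ∀ a, ∃ K : ℤ, θ a = φ + 2 * π * K := by
  rw [exp_unitary_conj, Unitary.conj_eq_smul_one_iff, exp_diagonal, Pi.exp_def,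
    diagonal_eq_smul_one_iff]
  simp only [← Complex.exp_eq_exp_ℂ, Complex.exp_ofReal_mul_I_eq_iff]

end UnitaryDiagonal

end Matrix

def finPairEquiv (k : ℕ) : Fin k × Fin 2 ≃ Fin (2 * k) :=
  finProdFinEquiv.trans (finCongr (Nat.mul_comm k 2))

@[simp]
theorem finPairEquiv_apply_val {k : ℕ} (a : Fin k) (b : Fin 2) :
    (finPairEquiv k (a, b) : ℕ) = b + 2 * a := by
  simp [finPairEquiv]

theorem Jmat_eq_realify (k : ℕ) : Jmat k = realify (finPairEquiv k) (I • 1) := by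
  have parity : ∀ x y : ℕ, 2 * x ≠ 2 * y + 1 := by omega
  refine (eq_realify_iff _ _ _).2 fun a c b d => ?_
  obtain rfl | h := eq_or_ne a c
  · fin_cases b <;> fin_cases d <;> simp [Jmat, add_comm 1]
  · have h' : (a : ℕ) ≠ c := Fin.val_ne_of_ne h
    fin_cases b <;> fin_cases d <;> simp [Jmat, h, h', h'.symm, parity, add_comm 1]

theorem Gmat_eq_realify (k : ℕ) (Φ : Fin (2 * k / 2) → ℝ) :
    Gmat (2 * k) Φ =
      realify (finPairEquiv k) (diagonal fun a => exp (Φ ⟨a, by omega⟩ * I)) := by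
  have half : ∀ x : ℕ, (1 + 2 * x) / 2 = x := by omega
  refine (eq_realify_iff _ _ _).2 fun a c b d => ?_
  obtain rfl | h := eq_or_ne a c
  · fin_cases b <;> fin_cases d <;>
      simp [Gmat, half, exp_ofReal_mul_I_re, exp_ofReal_mul_I_im]
  · have h' : (a : ℕ) ≠ c := Fin.val_ne_of_ne h
    fin_cases b <;> fin_cases d <;> simp [Gmat, h, h', half]

theorem Omat_eq_realify (k : ℕ) (Φ : Fin (2 * k / 2) → ℝ) (K : Fin (2 * k / 2) → ℤ) :
    Omat (2 * k) Φ K = realify (finPairEquiv k) (diagonal fun a =>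
      ((Φ ⟨a, by omega⟩ + 2 * π * K ⟨a, by omega⟩ : ℝ) : ℂ) * I) := by
  have half : ∀ x : ℕ, (1 + 2 * x) / 2 = x := by omega
  refine (eq_realify_iff _ _ _).2 fun a c b d => ?_
  obtain rfl | h := eq_or_ne a c
  · fin_cases b <;> fin_cases d <;> simp [Omat, half]
  · have h' : (a : ℕ) ≠ c := Fin.val_ne_of_ne h
    fin_cases b <;> fin_cases d <;> simp [Omat, h, h', half]

theorem Gmat_const_eq_realify (k : ℕ) (φ : ℝ) :
    Gmat (2 * k) (fun _ => φ) = realify (finPairEquiv k) (exp (φ * I) • 1) := by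
  rw [Gmat_eq_realify, smul_one_eq_diagonal]

theorem Gmat_const_eq_cos_add_sin (k : ℕ) (φ : ℝ) :
    Gmat (2 * k) (fun _ => φ) = Real.cos φ • 1 + Real.sin φ • Jmat k := by
  have h : exp (φ * I) • (1 : Matrix (Fin k) (Fin k) ℂ) =
      Real.cos φ • 1 + Real.sin φ • (I • 1) := by
    rw [exp_mul_I, add_smul, ← ofReal_cos, ← ofReal_sin, ← smul_smul, Complex.coe_smul,
      Complex.coe_smul]
  rw [Gmat_const_eq_realify, h, map_add, map_smul, map_smul, map_one, Jmat_eq_realify]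

theorem commute_Jmat_of_mexp_eq_Gmat {k : ℕ} {φ : ℝ} (hφ : Real.sin φ ≠ 0)
    {Ω : Matrix (Fin (2 * k)) (Fin (2 * k)) ℝ} (h : mexp Ω = Gmat (2 * k) (fun _ => φ)) :
    Commute Ω (Jmat k) := by
  refine commute_of_commute_smul_one_add_smul (a := Real.cos φ) hφ ?_
  rw [← Gmat_const_eq_cos_add_sin, ← h]
  exact (Commute.refl Ω).exp_right

theorem expm_inv_Gmat_scalar_general (k : ℕ) (φ : ℝ)
    (hφl : -Real.pi < φ) (hφu : φ < Real.pi) (hφ0 : φ ≠ 0)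
    (Ω : Matrix (Fin (2 * k)) (Fin (2 * k)) ℝ) (hΩ : Ωᵀ = -Ω) :
    mexp Ω = Gmat (2 * k) (fun _ => φ) ↔
      ∃ (K : Fin (2 * k / 2) → ℤ) (M : Matrix (Fin (2 * k)) (Fin (2 * k)) ℝ),
        Mᵀ * M = 1 ∧ M * Jmat k * Mᵀ = Jmat k ∧
        Ω = M * Omat (2 * k) (fun _ => φ) K * Mᵀ := by
  set e := finPairEquiv k
  have hJ : Jmat k = realify e (I • 1) := Jmat_eq_realify k
  have hG : Gmat (2 * k) (fun _ => φ) = realify e (exp (φ * I) • 1) := Gmat_const_eq_realify k φ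
  constructor
  · intro hexp
    have hsin : Real.sin φ ≠ 0 := fun h => hφ0 ((Real.sin_eq_zero_iff_of_lt_of_lt hφl hφu).1 h)
    obtain ⟨A, rfl⟩ :=
      exists_realify_eq_of_commute e (hJ ▸ commute_Jmat_of_mexp_eq_Gmat hsin hexp)
    have hskew : Aᴴ = -A := realify_injective e (by rw [realify_conjTranspose, hΩ, map_neg])
    obtain ⟨u, θ, rfl⟩ := exists_unitary_diagonal_of_conjTranspose_eq_neg hskew
    choose K hK using (exp_unitary_conj_diagonal_eq_iff u θ φ).1
      (realify_injective e ((realify_exp e _).trans (hexp.trans hG)))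
    refine ⟨K ∘ Fin.cast (by omega), realify e u,
      (realify_transpose_mul_self_eq_one_iff e u).2 u.2, ?_, ?_⟩
    · rw [hJ, realify_mul_mul_transpose, (Unitary.conj_eq_smul_one_iff u _ I).2 rfl]
    · rw [Omat_eq_realify, realify_mul_mul_transpose]
      congr
      ext a
      simp [hK]
  · rintro ⟨K, M, hM, hMJ, rfl⟩
    obtain ⟨U, rfl⟩ :=
      exists_realify_eq_of_commute e (hJ ▸ commute_of_transpose_mul_self_eq_one hM hMJ)
    have hU := (realify_transpose_mul_self_eq_one_iff e U).1 hM
    rw [Omat_eq_realify, realify_mul_mul_transpose, mexp, ← realify_exp, hG]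
    exact congrArg (realify e) ((exp_unitary_conj_diagonal_eq_iff ⟨U, hU⟩ _ φ).2 fun a => ⟨_, rfl⟩)

/-- The matrix exponential inverse of `G_{2k}(φ·I_k)` for `φ ∈ (−π,π) \ {0}`: a skew-symmetric
`2k×2k` matrix `Ω` satisfies `exp_m(Ω) = G_{2k}(φ·I_k)` iff `Ω = M·Ω_{2k}(φ·I_k,K)·Mᵀ` for some
diagonal integer matrix `K` and some `J_{2k}`-orthosymplectic matrix `M`. -/
theorem expm_inv_Gmat_scalar (k : ℕ) (hk : 0 < k) (φ : ℝ)
    (hφl : -Real.pi < φ) (hφu : φ < Real.pi) (hφ0 : φ ≠ 0)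
    (Ω : Matrix (Fin (2 * k)) (Fin (2 * k)) ℝ) (hΩ : Ωᵀ = -Ω) :
    mexp Ω = Gmat (2 * k) (fun _ => φ) ↔
      ∃ (K : Fin (2 * k / 2) → ℤ) (M : Matrix (Fin (2 * k)) (Fin (2 * k)) ℝ),
        Mᵀ * M = 1 ∧ M * Jmat k * Mᵀ = Jmat k ∧
        Ω = M * Omat (2 * k) (fun _ => φ) K * Mᵀ :=
  expm_inv_Gmat_scalar_general k φ hφl hφu hφ0 Ω hΩ
end

section
/- Let k₁ and p be positive integers, k = ⌊p/2⌋, let φ ∈ (0,π], and let Φ ∈ ℝ^{k×k} be a nonnegative diagonal matrix with all diagonal entries ≤ π such that φ is not a diagonal entry of Φ. Then a skew-symmetric (2k₁+p)×(2k₁+p) matrix Ω satisfies exp_m(Ω) = blockdiag(G_{2k₁}(φ·I_{k₁}), G_p(Φ)) if and only if Ω = blockdiag(Ω₁, Ω₂) with Ω₁ ∈ exp_m⁻¹(G_{2k₁}(φ·I_{k₁})) and Ω₂ ∈ exp_m⁻¹(G_p(Φ)). -/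
open Matrix

/-!
Ω commutes with `exp Ω` and, being skew, with `(exp Ω)ᵀ = exp (-Ω)`, hence with the symmetric
part `G + Gᵀ` of `G = blockdiag(G_{2k₁}(φ I), G_p(Φ))`. That symmetric part is diagonal, with
entries `2 cos φ` on the first block and `2 cos Φ_jj` or `2 = 2 cos 0` on the second. As `cos` is
injective on `[0, π]` and `φ ∉ {0} ∪ {Φ_jj}`, the two blocks have disjoint spectra, and a matrix
commuting with such a diagonal matrix has vanishing off-diagonal blocks.
-/

open Real

namespace Matrix

variable {n m : Type*} [Fintype n] [DecidableEq n] [Fintype m] [DecidableEq m]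

def fromBlocksRingHom (α : Type*) [Semiring α] :
    Matrix n n α × Matrix m m α →+* Matrix (n ⊕ m) (n ⊕ m) α where
  toFun x := fromBlocks x.1 0 0 x.2
  map_one' := fromBlocks_one
  map_mul' x y := by simp [fromBlocks_multiply]
  map_zero' := fromBlocks_zero
  map_add' x y := by simp [fromBlocks_add]

theorem apply_eq_zero_of_commute_diagonal {R : Type*} [CommRing R] [NoZeroDivisors R]
    {d : n → R} {M : Matrix n n R} (h : Commute (diagonal d) M) {i j : n} (hij : d i ≠ d j) :
    M i j = 0 := by
  have hij' : (d i - d j) * M i j = 0 := by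
    have := congr_fun (congr_fun h.eq i) j
    rw [diagonal_mul, mul_diagonal] at this
    linear_combination this
  exact (mul_eq_zero.mp hij').resolve_left (sub_ne_zero.mpr hij)

theorem eq_fromBlocks_zero_of_commute_diagonal {R : Type*} [CommRing R] [NoZeroDivisors R]
    {a : n → R} {b : m → R} (hab : ∀ i j, a i ≠ b j) {M : Matrix (n ⊕ m) (n ⊕ m) R}
    (h : Commute (diagonal (Sum.elim a b)) M) :
    M = fromBlocks M.toBlocks₁₁ 0 0 M.toBlocks₂₂ := by
  ext (i | i) (j | j)
  · rfl
  · exact apply_eq_zero_of_commute_diagonal h (hab i j)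
  · exact apply_eq_zero_of_commute_diagonal h (hab j i).symm
  · rfl

end Matrix

open Matrix

section
variable {n m : Type*} [Fintype n] [DecidableEq n] [Fintype m] [DecidableEq m]

open scoped Matrix.Norms.Operator in
theorem mexp_fromBlocks_zero (A : Matrix n n ℝ) (D : Matrix m m ℝ) :
    mexp (fromBlocks A 0 0 D) = fromBlocks (mexp A) 0 0 (mexp D) :=
  (NormedSpace.map_exp (fromBlocksRingHom ℝ)
    (continuous_fst.matrix_fromBlocks continuous_const continuous_const continuous_snd)
    (A, D)).symm.trans
    (congrArg₂ (fun X Y => fromBlocks X 0 0 Y) (Prod.fst_exp (A, D)) (Prod.snd_exp (A, D)))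

theorem commute_mexp_add_transpose {Ω : Matrix n n ℝ} (hΩ : Ωᵀ = -Ω) :
    Commute (mexp Ω + (mexp Ω)ᵀ) Ω := by
  have hT : (mexp Ω)ᵀ = mexp (-Ω) := by rw [mexp, mexp, ← exp_transpose, hΩ]
  rw [hT]
  exact (Commute.refl Ω).exp_left.add_left (Commute.refl Ω).neg_left.exp_left

end

theorem Gmat_apply_self (p : ℕ) (Φ : Fin (p / 2) → ℝ) (j : Fin p) :
    Gmat p Φ j j = if h : j.val / 2 < p / 2 then cos (Φ ⟨j.val / 2, h⟩) else 1 := by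
  simp only [Gmat, of_apply, true_and]
  split_ifs <;> simp_all

theorem Gmat_const_apply_self (k : ℕ) (φ : ℝ) (i : Fin (2 * k)) :
    Gmat (2 * k) (fun _ => φ) i i = cos φ := by
  rw [Gmat_apply_self, dif_pos (by omega)]

theorem Gmat_add_transpose (p : ℕ) (Φ : Fin (p / 2) → ℝ) :
    Gmat p Φ + (Gmat p Φ)ᵀ = diagonal (fun j => 2 * Gmat p Φ j j) := by
  ext i j
  rcases eq_or_ne i j with rfl | hij
  · simp [two_mul]
  · simp only [Matrix.add_apply, transpose_apply, diagonal_apply_ne _ hij, Gmat, of_apply]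
    by_cases hb : i.val / 2 = j.val / 2 ∧ i.val / 2 < p / 2
    · have hb' : j.val / 2 = i.val / 2 ∧ j.val / 2 < p / 2 := ⟨hb.1.symm, hb.1 ▸ hb.2⟩
      have hblock : (⟨j.val / 2, hb'.2⟩ : Fin (p / 2)) = ⟨i.val / 2, hb.2⟩ := Fin.ext hb'.1
      have hpar : i.val % 2 ≠ j.val % 2 := fun h => hij (Fin.ext (by omega))
      rw [dif_pos hb, dif_pos hb', hblock]
      rcases Nat.mod_two_eq_zero_or_one i.val with hi | hi <;>
        rcases Nat.mod_two_eq_zero_or_one j.val with hj | hj <;>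
        first | omega | simp [hi, hj]
    · have hb' : ¬(j.val / 2 = i.val / 2 ∧ j.val / 2 < p / 2) := fun h =>
        hb ⟨h.1.symm, h.1 ▸ h.2⟩
      rw [dif_neg hb, dif_neg hb', if_neg hij, if_neg hij.symm, add_zero]

theorem Gmat_apply_self_ne_cos {p : ℕ} {Φ : Fin (p / 2) → ℝ} {φ : ℝ} (hφ0 : 0 < φ)
    (hφπ : φ ≤ π) (hΦ0 : ∀ i, 0 ≤ Φ i) (hΦπ : ∀ i, Φ i ≤ π) (hφΦ : ∀ i, Φ i ≠ φ) (j : Fin p) :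
    Gmat p Φ j j ≠ cos φ := by
  have hφ : φ ∈ Set.Icc 0 π := ⟨hφ0.le, hφπ⟩
  rw [Gmat_apply_self]
  split_ifs
  · exact fun h => hφΦ _ (injOn_cos ⟨hΦ0 _, hΦπ _⟩ hφ h)
  · rw [← cos_zero]
    exact fun h => hφ0.ne (injOn_cos ⟨le_rfl, pi_pos.le⟩ hφ h)

theorem expm_inv_blockdiag_general (k₁ p : ℕ)
    (φ : ℝ) (hφ0 : 0 < φ) (hφπ : φ ≤ Real.pi)
    (Φ : Fin (p / 2) → ℝ) (hΦ0 : ∀ i, 0 ≤ Φ i) (hΦπ : ∀ i, Φ i ≤ Real.pi)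
    (hφΦ : ∀ i, Φ i ≠ φ)
    (Ω : Matrix (Fin (2 * k₁) ⊕ Fin p) (Fin (2 * k₁) ⊕ Fin p) ℝ) (hΩ : Ωᵀ = -Ω) :
    mexp Ω = Matrix.fromBlocks (Gmat (2 * k₁) (fun _ => φ)) 0 0 (Gmat p Φ) ↔
      ∃ (Ω₁ : Matrix (Fin (2 * k₁)) (Fin (2 * k₁)) ℝ) (Ω₂ : Matrix (Fin p) (Fin p) ℝ),
        Ω₁ᵀ = -Ω₁ ∧ Ω₂ᵀ = -Ω₂ ∧
        mexp Ω₁ = Gmat (2 * k₁) (fun _ => φ) ∧ mexp Ω₂ = Gmat p Φ ∧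
        Ω = Matrix.fromBlocks Ω₁ 0 0 Ω₂ := by
  constructor
  · intro hexp
    have hsymm : mexp Ω + (mexp Ω)ᵀ = diagonal (Sum.elim
        (fun i => 2 * Gmat (2 * k₁) (fun _ => φ) i i) (fun j => 2 * Gmat p Φ j j)) := by
      rw [hexp, fromBlocks_transpose, fromBlocks_add, Gmat_add_transpose, Gmat_add_transpose,
        ← fromBlocks_diagonal]
      simp
    have hblock := eq_fromBlocks_zero_of_commute_diagonal
      (fun i j => by
        rw [Gmat_const_apply_self]
        exact (mul_right_injective₀ two_ne_zero).ne
          (Gmat_apply_self_ne_cos hφ0 hφπ hΦ0 hΦπ hφΦ j).symm)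
      (hsymm ▸ commute_mexp_add_transpose hΩ)
    rw [hblock, mexp_fromBlocks_zero, fromBlocks_inj] at hexp
    rw [hblock, fromBlocks_transpose, fromBlocks_neg, fromBlocks_inj] at hΩ
    exact ⟨_, _, hΩ.1, hΩ.2.2.2, hexp.1, hexp.2.2.2, hblock⟩
  · rintro ⟨Ω₁, Ω₂, -, -, h₁, h₂, rfl⟩
    rw [mexp_fromBlocks_zero, h₁, h₂]

/-- The matrix exponential inverse of the block-diagonal matrix
`blockdiag(G_{2k₁}(φ·I_{k₁}), G_p(Φ))`, where `φ ∈ (0,π]` is not a diagonal entry of the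
nonnegative diagonal matrix `Φ` with entries `≤ π`: a skew-symmetric matrix `Ω` satisfies
`exp_m(Ω) = blockdiag(G_{2k₁}(φ·I_{k₁}), G_p(Φ))` iff `Ω = blockdiag(Ω₁, Ω₂)` with
`Ω₁ ∈ exp_m⁻¹(G_{2k₁}(φ·I_{k₁}))` and `Ω₂ ∈ exp_m⁻¹(G_p(Φ))`. -/
theorem expm_inv_blockdiag (k₁ p : ℕ) (hk₁ : 0 < k₁) (hp : 0 < p)
    (φ : ℝ) (hφ0 : 0 < φ) (hφπ : φ ≤ Real.pi)
    (Φ : Fin (p / 2) → ℝ) (hΦ0 : ∀ i, 0 ≤ Φ i) (hΦπ : ∀ i, Φ i ≤ Real.pi)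
    (hφΦ : ∀ i, Φ i ≠ φ)
    (Ω : Matrix (Fin (2 * k₁) ⊕ Fin p) (Fin (2 * k₁) ⊕ Fin p) ℝ) (hΩ : Ωᵀ = -Ω) :
    mexp Ω = Matrix.fromBlocks (Gmat (2 * k₁) (fun _ => φ)) 0 0 (Gmat p Φ) ↔
      ∃ (Ω₁ : Matrix (Fin (2 * k₁)) (Fin (2 * k₁)) ℝ) (Ω₂ : Matrix (Fin p) (Fin p) ℝ),
        Ω₁ᵀ = -Ω₁ ∧ Ω₂ᵀ = -Ω₂ ∧
        mexp Ω₁ = Gmat (2 * k₁) (fun _ => φ) ∧ mexp Ω₂ = Gmat p Φ ∧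
        Ω = Matrix.fromBlocks Ω₁ 0 0 Ω₂ :=
  expm_inv_blockdiag_general k₁ p φ hφ0 hφπ Φ hΦ0 hΦπ hφΦ Ω hΩ
end

section
/- Let β > 0, let p ≥ 2 be an integer, k = ⌊p/2⌋, let A ∈ Skew(p), B ∈ ℝ^{p×p}, and let Φ₁, Φ₂ ∈ ℝ^{k×k} be nonnegative diagonal matrices with all diagonal entries ≤ π such that exp_m([[2βA, −Bᵀ],[B, 0]]) = blockdiag(G_p(Φ₁), G_p(Φ₂)) and exp_m((1−2β)A) = G_p(−Φ₁). Then for every real number φ ≠ 0 that occurs with multiplicity s₁ ≥ 1 among the diagonal entries of Φ₁ and with multiplicity s₂ ≥ 0 among the diagonal entries of Φ₂, there exist a principal 2s₁×2s₁ submatrix Â of A (obtained by selecting the same set of 2s₁ row and column indices) and a 2s₂×2s₁ submatrix B̂ of B (obtained by selecting 2s₂ rows and the same 2s₁ columns) such that exp_m([[2βÂ, −B̂ᵀ],[B̂, 0]]) = blockdiag(G_{2s₁}(φ·I_{s₁}), G_{2s₂}(φ·I_{s₂})) and exp_m((1−2β)Â) = G_{2s₁}(−φ·I_{s₁}). -/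
open Matrix

/-!
The matrix `X = [[2βA, −Bᵀ], [B, 0]]` commutes with `exp X` and with `exp (−X) = (exp X)⁻¹`,
hence with their sum. For `exp X = blockdiag(G_p(Φ₁), G_p(Φ₂))` this sum is the diagonal matrix
of the numbers `2 cos θ`, `θ` running over the block angles, so `X` has no entry linking two
indices whose block angles have different cosines. Angles in `[0, π]` are determined by their
cosine, and `φ ≠ 0` excludes the extra coordinate of odd `p`, so the rows of `X` indexed by the
blocks of angle `φ` vanish outside these blocks. For such a principal submatrix, `exp` commutes
with taking the submatrix. The same argument applies to `(1 − 2β)A`, with `exp = G_p(−Φ₁)`.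
-/

theorem Set.Finite.exists_injective_range_eq {α : Type*} {S : Set α} (hS : S.Finite) :
    ∃ e : Fin S.ncard → α, Function.Injective e ∧ Set.range e = S := by
  have := hS.to_subtype
  let f := Finite.equivFinOfCardEq (Nat.card_coe_set_eq S)
  refine ⟨Subtype.val ∘ f.symm, Subtype.val_injective.comp f.symm.injective, ?_⟩
  rw [Set.range_comp, f.symm.range_eq_univ, Set.image_univ, Subtype.range_coe]

theorem Matrix.apply_eq_zero_of_commute_diagonal_s10 {ι R : Type*} [Fintype ι] [DecidableEq ι]
    [CommRing R] [NoZeroDivisors R] {M : Matrix ι ι R} {d : ι → R}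
    (h : Commute M (diagonal d)) {i j : ι} (hij : d i ≠ d j) : M i j = 0 := by
  have hij' : M i j * d j = d i * M i j := by
    simpa [mul_diagonal, diagonal_mul] using congr_fun (congr_fun h.eq i) j
  have : M i j * (d j - d i) = 0 := by linear_combination hij'
  exact (mul_eq_zero.mp this).resolve_right (sub_ne_zero.mpr hij.symm)

theorem Matrix.fromBlocks_submatrix_sumMap {l m n o l' m' n' o' α : Type*}
    (A : Matrix n l α) (B : Matrix n m α) (C : Matrix o l α) (D : Matrix o m α)
    (f : n' → n) (g : o' → o) (f' : l' → l) (g' : m' → m) :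
    (fromBlocks A B C D).submatrix (Sum.map f g) (Sum.map f' g') =
      fromBlocks (A.submatrix f f') (B.submatrix f g') (C.submatrix g f') (D.submatrix g g') := by
  ext (i | i) (j | j) <;> rfl

section RowsSupported

variable {ι κ R : Type*} [Fintype ι] [Fintype κ]

theorem Matrix.mul_apply_of_rows_supported [NonUnitalNonAssocSemiring R] {N K : Matrix ι ι R}
    {r : κ → ι} (hr : Function.Injective r) (hN : ∀ a, ∀ j ∉ Set.range r, N (r a) j = 0)
    (a : κ) (j : ι) : (N * K) (r a) j = ∑ b, N (r a) (r b) * K (r b) j :=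
  (Fintype.sum_of_injective r hr _ _ (fun x hx => by simp [hN a x hx]) fun _ => rfl).symm

variable [DecidableEq ι] [Semiring R] {M : Matrix ι ι R} {r : κ → ι}

theorem Matrix.pow_rows_supported (hr : Function.Injective r)
    (hM : ∀ a, ∀ j ∉ Set.range r, M (r a) j = 0) (n : ℕ) :
    ∀ a, ∀ j ∉ Set.range r, (M ^ n) (r a) j = 0 := by
  induction n with
  | zero => exact fun a j hj => one_apply_ne fun h => hj ⟨a, h⟩
  | succ n ih =>
    intro a j hj
    rw [pow_succ, mul_apply_of_rows_supported hr ih]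
    exact Finset.sum_eq_zero fun b _ => by rw [hM b j hj, mul_zero]

theorem Matrix.submatrix_pow_of_rows_supported [DecidableEq κ] (hr : Function.Injective r)
    (hM : ∀ a, ∀ j ∉ Set.range r, M (r a) j = 0) (n : ℕ) :
    (M ^ n).submatrix r r = M.submatrix r r ^ n := by
  induction n with
  | zero => exact submatrix_one r hr
  | succ n ih =>
    ext a b
    rw [pow_succ, pow_succ, ← ih, submatrix_apply,
      mul_apply_of_rows_supported hr (pow_rows_supported hr hM n), mul_apply]
    rfl

attribute [local instance] Matrix.linftyOpNormedRing Matrix.linftyOpNormedAlgebra in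
theorem mexp_submatrix_of_rows_supported [DecidableEq κ] {M : Matrix ι ι ℝ}
    (hr : Function.Injective r) (hM : ∀ a, ∀ j ∉ Set.range r, M (r a) j = 0) :
    mexp (M.submatrix r r) = (mexp M).submatrix r r := by
  let L : Matrix ι ι ℝ →ₗ[ℝ] Matrix κ κ ℝ :=
    { toFun := fun N => N.submatrix r r, map_add' := fun _ _ => rfl, map_smul' := fun _ _ => rfl }
  have h := (NormedSpace.exp_series_hasSum_exp' (𝕂 := ℝ) M).map L
    (LinearMap.continuous_of_finiteDimensional L)
  refine (NormedSpace.exp_series_hasSum_exp' (𝕂 := ℝ) (M.submatrix r r)).unique ?_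
  simp only [Function.comp_def, map_smul] at h
  -- the other goals identify the operator-norm structure on `Matrix κ κ ℝ` with the default one
  convert h using 3 with n
  all_goals first | rfl | exact (submatrix_pow_of_rows_supported hr hM n).symm

end RowsSupported

section LevelSets

variable {ι κ : Type*} [Fintype ι] [DecidableEq ι]

theorem commute_diagonal_of_mexp_eq {M G H : Matrix ι ι ℝ} {d : ι → ℝ} (hG : mexp M = G)
    (hGH : G * H = 1) (hd : G + H = diagonal d) : Commute M (diagonal d) := by
  have hH : mexp (-M) = H := by
    rw [mexp, Matrix.exp_neg, ← mexp, hG, Matrix.inv_eq_right_inv hGH]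
  rw [← hd, ← hG, ← hH]
  exact (Commute.refl M).exp_right.add_right (Commute.refl M).neg_right.exp_right

theorem mexp_submatrix_of_mexp_eq [Fintype κ] [DecidableEq κ] {M G H : Matrix ι ι ℝ}
    {d : ι → ℝ} (hG : mexp M = G) (hGH : G * H = 1) (hd : G + H = diagonal d) {r : κ → ι}
    (hr : Function.Injective r) {c : ℝ} (hlevel : ∀ j, d j = c ↔ j ∈ Set.range r) :
    mexp (M.submatrix r r) = G.submatrix r r := by
  rw [mexp_submatrix_of_rows_supported hr, hG]
  intro a j hj
  refine apply_eq_zero_of_commute_diagonal_s10 (commute_diagonal_of_mexp_eq hG hGH hd) ?_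
  rw [(hlevel (r a)).mpr ⟨a, rfl⟩]
  exact fun h => hj ((hlevel j).mp h.symm)

end LevelSets

section PairRotation

variable {ι : Type*} [DecidableEq ι]

-- With `c = cos θ`, `s = ± sin θ` this rotates each coordinate plane `{i, σ i}` by its angle.
def pairRotation (σ : ι → ι) (c s : ι → ℝ) : Matrix ι ι ℝ :=
  of fun i j => (if i = j then c j else 0) + (if i = σ j then s j else 0)

theorem pairRotation_mul_pairRotation_neg [Fintype ι] {σ : ι → ι} (hσ : Function.Involutive σ)
    {c s : ι → ℝ} (hc : ∀ i, c (σ i) = c i) (hs : ∀ i, s (σ i) = -s i)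
    (hcs : ∀ i, c i ^ 2 + s i ^ 2 = 1) :
    pairRotation σ c s * pairRotation σ c (-s) = 1 := by
  ext i j
  have hσi (x : ι) : (i = σ x) = (x = σ i) := propext (hσ.eq_iff.symm.trans eq_comm)
  simp only [pairRotation, mul_apply, of_apply, add_mul, mul_add, ite_mul, mul_ite, zero_mul,
    mul_zero, Finset.sum_add_distrib, hσi, Finset.sum_ite_eq', Finset.mem_univ, if_true,
    hσ.injective.eq_iff, hc, hs, Pi.neg_apply, one_apply]
  by_cases hij : i = j
  · subst hij
    simp only [if_true]
    split_ifs <;> linear_combination hcs i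
  · simp only [hij, if_false, eq_comm (a := j)]
    split_ifs <;> ring

theorem pairRotation_add_pairRotation_neg (σ : ι → ι) (c s : ι → ℝ) :
    pairRotation σ c s + pairRotation σ c (-s) = diagonal (fun j => 2 * c j) := by
  ext i j
  simp only [pairRotation, Matrix.add_apply, of_apply, diagonal_apply, Pi.neg_apply]
  split_ifs <;> simp_all <;> ring

theorem pairRotation_submatrix {κ : Type*} [DecidableEq κ] {σ : ι → ι} {τ : κ → κ} {f : κ → ι}
    (hf : Function.Injective f) (hfσ : ∀ a, σ (f a) = f (τ a)) (c s : ι → ℝ) :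
    (pairRotation σ c s).submatrix f f = pairRotation τ (c ∘ f) (s ∘ f) := by
  ext a b
  simp [pairRotation, hfσ, hf.eq_iff]

end PairRotation

section Blocks

variable {p : ℕ}

def blockPartner (p : ℕ) (i : Fin p) : Fin p :=
  if h : i.val / 2 < p / 2 then ⟨2 * (i.val / 2) + (1 - i.val % 2), by omega⟩ else i

def blockAngle (Φ : Fin (p / 2) → ℝ) (i : Fin p) : ℝ :=
  if h : i.val / 2 < p / 2 then Φ ⟨i.val / 2, h⟩ else 0

theorem blockPartner_involutive : Function.Involutive (blockPartner p) := by
  intro i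
  unfold blockPartner
  split_ifs with h h' <;> ext <;> simp only at * <;> omega

theorem blockAngle_blockPartner (Φ : Fin (p / 2) → ℝ) (i : Fin p) :
    blockAngle Φ (blockPartner p i) = blockAngle Φ i := by
  unfold blockAngle blockPartner
  split_ifs with h h' <;> first | rfl | (congr 2; simp only; omega) | (simp only at h'; omega)

theorem blockAngle_neg (Φ : Fin (p / 2) → ℝ) (i : Fin p) :
    blockAngle (fun u => -Φ u) i = -blockAngle Φ i := by
  unfold blockAngle
  split_ifs <;> simp

theorem blockAngle_mem_Icc {Φ : Fin (p / 2) → ℝ} (hΦ : ∀ u, Φ u ∈ Set.Icc 0 Real.pi)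
    (j : Fin p) : blockAngle Φ j ∈ Set.Icc 0 Real.pi := by
  unfold blockAngle
  split_ifs
  · exact hΦ _
  · exact ⟨le_rfl, Real.pi_pos.le⟩

theorem signedSin_blockPartner (Φ : Fin (p / 2) → ℝ) (i : Fin p) :
    (-1) ^ ((blockPartner p i).val % 2) * Real.sin (blockAngle Φ (blockPartner p i)) =
      -((-1) ^ (i.val % 2) * Real.sin (blockAngle Φ i)) := by
  rw [blockAngle_blockPartner]
  by_cases h : i.val / 2 < p / 2
  · have hpar : (blockPartner p i).val % 2 = 1 - i.val % 2 := by
      simp only [blockPartner, dif_pos h]; omega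
    rcases Nat.mod_two_eq_zero_or_one i.val with h2 | h2 <;> simp [hpar, h2]
  · simp [blockAngle, dif_neg h]

theorem Gmat_eq_pairRotation (Φ : Fin (p / 2) → ℝ) :
    Gmat p Φ = pairRotation (blockPartner p) (fun j => Real.cos (blockAngle Φ j))
      (fun j => (-1) ^ (j.val % 2) * Real.sin (blockAngle Φ j)) := by
  ext i j
  by_cases hj : j.val / 2 < p / 2
  · by_cases hij : i.val / 2 = j.val / 2
    · have hΦ : Φ ⟨i.val / 2, hij ▸ hj⟩ = Φ ⟨j.val / 2, hj⟩ := congrArg Φ (Fin.ext hij)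
      rw [Gmat, of_apply, dif_pos ⟨hij, hij ▸ hj⟩, hΦ, pairRotation, of_apply, blockAngle,
        dif_pos hj, blockPartner, dif_pos hj]
      simp only [Fin.ext_iff]
      split_ifs <;> first | (exfalso; omega) | simp_all
    · rw [Gmat, of_apply, dif_neg (fun h => hij h.1), pairRotation, of_apply, blockPartner,
        dif_pos hj]
      simp only [Fin.ext_iff]
      split_ifs <;> first | (exfalso; omega) | simp
  · rw [Gmat, of_apply, dif_neg (fun h => hj (by omega)), pairRotation, of_apply, blockAngle,
      dif_neg hj, blockPartner, dif_neg hj]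
    split_ifs <;> simp

theorem Gmat_mul_Gmat_neg (Φ : Fin (p / 2) → ℝ) :
    Gmat p Φ * Gmat p (fun u => -Φ u) = 1 := by
  simp only [Gmat_eq_pairRotation, blockAngle_neg, Real.cos_neg, Real.sin_neg, mul_neg]
  refine pairRotation_mul_pairRotation_neg blockPartner_involutive
    (fun i => by rw [blockAngle_blockPartner]) (signedSin_blockPartner Φ) (fun i => ?_)
  simp [mul_pow, ← pow_mul, Real.cos_sq_add_sin_sq]

theorem Gmat_add_Gmat_neg (Φ : Fin (p / 2) → ℝ) :
    Gmat p Φ + Gmat p (fun u => -Φ u) =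
      diagonal (fun j => 2 * Real.cos (blockAngle Φ j)) := by
  simp only [Gmat_eq_pairRotation, blockAngle_neg, Real.cos_neg, Real.sin_neg, mul_neg]
  exact pairRotation_add_pairRotation_neg _ _ _

theorem fromBlocks_Gmat_mul_fromBlocks_Gmat_neg (Φ₁ Φ₂ : Fin (p / 2) → ℝ) :
    fromBlocks (Gmat p Φ₁) 0 0 (Gmat p Φ₂) *
      fromBlocks (Gmat p fun u => -Φ₁ u) 0 0 (Gmat p fun u => -Φ₂ u) = 1 := by
  simp [fromBlocks_multiply, Gmat_mul_Gmat_neg]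

theorem fromBlocks_Gmat_add_fromBlocks_Gmat_neg (Φ₁ Φ₂ : Fin (p / 2) → ℝ) :
    fromBlocks (Gmat p Φ₁) 0 0 (Gmat p Φ₂) +
      fromBlocks (Gmat p fun u => -Φ₁ u) 0 0 (Gmat p fun u => -Φ₂ u) =
      diagonal (Sum.elim (fun j => 2 * Real.cos (blockAngle Φ₁ j))
        fun j => 2 * Real.cos (blockAngle Φ₂ j)) := by
  simp [fromBlocks_add, Gmat_add_Gmat_neg, fromBlocks_diagonal]

end Blocks

section SelectBlocks

variable {p k : ℕ}

def selectBlocks (e : Fin k → Fin (p / 2)) (a : Fin (2 * k)) : Fin p :=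
  ⟨2 * (e ⟨a.val / 2, by omega⟩).val + a.val % 2,
    by have := (e ⟨a.val / 2, by omega⟩).isLt; omega⟩

variable {e : Fin k → Fin (p / 2)}

theorem selectBlocks_injective (he : Function.Injective e) :
    Function.Injective (selectBlocks e) := by
  intro a b hab
  have hv := congrArg Fin.val hab
  simp only [selectBlocks] at hv
  have hdiv : e ⟨a.val / 2, by omega⟩ = e ⟨b.val / 2, by omega⟩ := Fin.ext (by omega)
  have := congrArg Fin.val (he hdiv)
  ext
  simp only at this
  omega

theorem mem_range_selectBlocks (j : Fin p) :
    j ∈ Set.range (selectBlocks e) ↔ ∃ h : j.val / 2 < p / 2, ⟨j.val / 2, h⟩ ∈ Set.range e := by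
  constructor
  · rintro ⟨a, rfl⟩
    refine ⟨by simp only [selectBlocks]; omega, ⟨a.val / 2, by omega⟩, Fin.ext ?_⟩
    simp only [selectBlocks]; omega
  · rintro ⟨h, u, hu⟩
    refine ⟨⟨2 * u.val + j.val % 2, by omega⟩, Fin.ext ?_⟩
    have hu' : e ⟨(2 * u.val + j.val % 2) / 2, by omega⟩ = ⟨j.val / 2, h⟩ := by
      rw [← hu]; congr 1; ext; simp only; omega
    simp only [selectBlocks, hu']
    omega

theorem blockAngle_selectBlocks (Φ : Fin (p / 2) → ℝ) (a : Fin (2 * k)) :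
    blockAngle Φ (selectBlocks e a) = Φ (e ⟨a.val / 2, by omega⟩) := by
  have h : (selectBlocks e a).val / 2 < p / 2 := by simp only [selectBlocks]; omega
  rw [blockAngle, dif_pos h]
  congr 1; ext; simp only [selectBlocks]; omega

theorem blockPartner_selectBlocks (a : Fin (2 * k)) :
    blockPartner p (selectBlocks e a) = selectBlocks e (blockPartner (2 * k) a) := by
  have ha : a.val / 2 < 2 * k / 2 := by omega
  have h : (selectBlocks e a).val / 2 < p / 2 := by simp only [selectBlocks]; omega
  rw [blockPartner, dif_pos h, blockPartner, dif_pos ha]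
  have he : e ⟨(2 * (a.val / 2) + (1 - a.val % 2)) / 2, by omega⟩ = e ⟨a.val / 2, by omega⟩ := by
    congr 1; ext; simp only; omega
  ext
  simp only [selectBlocks, he]
  omega

theorem Gmat_submatrix_selectBlocks (he : Function.Injective e) {Φ : Fin (p / 2) → ℝ} {ψ : ℝ}
    (hΦ : ∀ u, Φ (e u) = ψ) :
    (Gmat p Φ).submatrix (selectBlocks e) (selectBlocks e) = Gmat (2 * k) (fun _ => ψ) := by
  rw [Gmat_eq_pairRotation, Gmat_eq_pairRotation,
    pairRotation_submatrix (selectBlocks_injective he) blockPartner_selectBlocks]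
  have hangle (a : Fin (2 * k)) : blockAngle (fun _ => ψ) a = ψ := by
    rw [blockAngle, dif_pos (by omega)]
  have hpar (a : Fin (2 * k)) : (selectBlocks e a).val % 2 = a.val % 2 := by
    simp only [selectBlocks]; omega
  simp only [Function.comp_def, blockAngle_selectBlocks, hΦ, hangle, hpar]

theorem blockAngle_eq_iff_mem_range_selectBlocks {Φ : Fin (p / 2) → ℝ} {φ : ℝ} (hφ : φ ≠ 0)
    (he : Set.range e = {u | Φ u = φ}) (j : Fin p) :
    blockAngle Φ j = φ ↔ j ∈ Set.range (selectBlocks e) := by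
  rw [mem_range_selectBlocks, he, blockAngle]
  split_ifs with h
  · simp [h]
  · simp [h, Ne.symm hφ]

theorem two_mul_cos_blockAngle_eq_iff_mem_range_selectBlocks {Φ : Fin (p / 2) → ℝ}
    (hΦ : ∀ u, Φ u ∈ Set.Icc 0 Real.pi) {φ : ℝ} (hφ : φ ∈ Set.Icc 0 Real.pi) (hφ0 : φ ≠ 0)
    (he : Set.range e = {u | Φ u = φ}) (j : Fin p) :
    2 * Real.cos (blockAngle Φ j) = 2 * Real.cos φ ↔ j ∈ Set.range (selectBlocks e) := by
  rw [mul_right_inj' two_ne_zero, Real.injOn_cos.eq_iff (blockAngle_mem_Icc hΦ j) hφ,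
    blockAngle_eq_iff_mem_range_selectBlocks hφ0 he]

end SelectBlocks

theorem reduced_geodesic_loop_general (β : ℝ) (p : ℕ)
    (A B : Matrix (Fin p) (Fin p) ℝ)
    (Φ₁ Φ₂ : Fin (p / 2) → ℝ)
    (hΦ₁0 : ∀ i, 0 ≤ Φ₁ i) (hΦ₁π : ∀ i, Φ₁ i ≤ Real.pi)
    (hΦ₂0 : ∀ i, 0 ≤ Φ₂ i) (hΦ₂π : ∀ i, Φ₂ i ≤ Real.pi)
    (hexpX : mexp (Matrix.fromBlocks ((2 * β) • A) (-Bᵀ) B 0) =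
      Matrix.fromBlocks (Gmat p Φ₁) 0 0 (Gmat p Φ₂))
    (hexpA : mexp ((1 - 2 * β) • A) = Gmat p (fun i => -(Φ₁ i)))
    (φ : ℝ) (hφ : φ ≠ 0) (s₁ s₂ : ℕ)
    (hs₁ : s₁ = {i : Fin (p / 2) | Φ₁ i = φ}.ncard)
    (hs₂ : s₂ = {i : Fin (p / 2) | Φ₂ i = φ}.ncard)
    (hs₁pos : 1 ≤ s₁) :
    ∃ (r : Fin (2 * s₁) → Fin p) (r₂ : Fin (2 * s₂) → Fin p),
      Function.Injective r ∧ Function.Injective r₂ ∧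
      mexp (Matrix.fromBlocks ((2 * β) • A.submatrix r r) (-(B.submatrix r₂ r)ᵀ)
          (B.submatrix r₂ r) 0) =
        Matrix.fromBlocks (Gmat (2 * s₁) (fun _ => φ)) 0 0 (Gmat (2 * s₂) (fun _ => φ)) ∧
      mexp ((1 - 2 * β) • A.submatrix r r) = Gmat (2 * s₁) (fun _ => -φ) := by
  subst hs₁ hs₂
  obtain ⟨e₁, he₁, hrange₁⟩ := (Set.toFinite {i | Φ₁ i = φ}).exists_injective_range_eq
  obtain ⟨e₂, he₂, hrange₂⟩ := (Set.toFinite {i | Φ₂ i = φ}).exists_injective_range_eq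
  obtain ⟨u, hu⟩ := Set.nonempty_of_ncard_ne_zero (by omega : {i | Φ₁ i = φ}.ncard ≠ 0)
  have hφπ : φ ∈ Set.Icc 0 Real.pi := hu ▸ ⟨hΦ₁0 u, hΦ₁π u⟩
  have hlevel₁ := two_mul_cos_blockAngle_eq_iff_mem_range_selectBlocks
    (fun u => ⟨hΦ₁0 u, hΦ₁π u⟩) hφπ hφ hrange₁
  have hlevel₂ := two_mul_cos_blockAngle_eq_iff_mem_range_selectBlocks
    (fun u => ⟨hΦ₂0 u, hΦ₂π u⟩) hφπ hφ hrange₂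
  have hΦe₁ (u) : Φ₁ (e₁ u) = φ := hrange₁.subset ⟨u, rfl⟩
  have hΦe₂ (u) : Φ₂ (e₂ u) = φ := hrange₂.subset ⟨u, rfl⟩
  refine ⟨selectBlocks e₁, selectBlocks e₂, selectBlocks_injective he₁,
    selectBlocks_injective he₂, ?_, ?_⟩
  · have := mexp_submatrix_of_mexp_eq hexpX (fromBlocks_Gmat_mul_fromBlocks_Gmat_neg Φ₁ Φ₂)
      (fromBlocks_Gmat_add_fromBlocks_Gmat_neg Φ₁ Φ₂)
      ((selectBlocks_injective he₁).sumMap (selectBlocks_injective he₂))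
      (c := 2 * Real.cos φ) (by rintro (j | j) <;> simp [hlevel₁, hlevel₂])
    simpa [fromBlocks_submatrix_sumMap, submatrix_smul, submatrix_neg, transpose_submatrix,
      Gmat_submatrix_selectBlocks he₁ hΦe₁, Gmat_submatrix_selectBlocks he₂ hΦe₂] using this
  · change mexp (((1 - 2 * β) • A).submatrix _ _) = _
    rw [mexp_submatrix_of_mexp_eq hexpA (Gmat_mul_Gmat_neg _) (Gmat_add_Gmat_neg _)
      (selectBlocks_injective he₁) (c := 2 * Real.cos φ)
      (by simpa only [blockAngle_neg, Real.cos_neg] using hlevel₁)]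
    exact Gmat_submatrix_selectBlocks he₁ fun u => by rw [hΦe₁]

/-- Structure reduction for geodesic loops: if the loop data `(A, B)` satisfies
`exp_m([[2βA, −Bᵀ],[B, 0]]) = blockdiag(G_p(Φ₁), G_p(Φ₂))` and `exp_m((1−2β)A) = G_p(−Φ₁)`,
then for every `φ ≠ 0` of multiplicity `s₁ ≥ 1` in `Φ₁` and multiplicity `s₂` in `Φ₂` there are
a principal `2s₁×2s₁` submatrix `Â` of `A` and a `2s₂×2s₁` submatrix `B̂` of `B` (same column
indices) with `exp_m([[2βÂ, −B̂ᵀ],[B̂, 0]]) = blockdiag(G_{2s₁}(φ·I), G_{2s₂}(φ·I))` and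
`exp_m((1−2β)Â) = G_{2s₁}(−φ·I)`. -/
theorem reduced_geodesic_loop (β : ℝ) (hβ : 0 < β) (p : ℕ) (hp : 2 ≤ p)
    (A B : Matrix (Fin p) (Fin p) ℝ) (hA : Aᵀ = -A)
    (Φ₁ Φ₂ : Fin (p / 2) → ℝ)
    (hΦ₁0 : ∀ i, 0 ≤ Φ₁ i) (hΦ₁π : ∀ i, Φ₁ i ≤ Real.pi)
    (hΦ₂0 : ∀ i, 0 ≤ Φ₂ i) (hΦ₂π : ∀ i, Φ₂ i ≤ Real.pi)
    (hexpX : mexp (Matrix.fromBlocks ((2 * β) • A) (-Bᵀ) B 0) =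
      Matrix.fromBlocks (Gmat p Φ₁) 0 0 (Gmat p Φ₂))
    (hexpA : mexp ((1 - 2 * β) • A) = Gmat p (fun i => -(Φ₁ i)))
    (φ : ℝ) (hφ : φ ≠ 0) (s₁ s₂ : ℕ)
    (hs₁ : s₁ = {i : Fin (p / 2) | Φ₁ i = φ}.ncard)
    (hs₂ : s₂ = {i : Fin (p / 2) | Φ₂ i = φ}.ncard)
    (hs₁pos : 1 ≤ s₁) :
    ∃ (r : Fin (2 * s₁) → Fin p) (r₂ : Fin (2 * s₂) → Fin p),
      Function.Injective r ∧ Function.Injective r₂ ∧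
      mexp (Matrix.fromBlocks ((2 * β) • A.submatrix r r) (-(B.submatrix r₂ r)ᵀ)
          (B.submatrix r₂ r) 0) =
        Matrix.fromBlocks (Gmat (2 * s₁) (fun _ => φ)) 0 0 (Gmat (2 * s₂) (fun _ => φ)) ∧
      mexp ((1 - 2 * β) • A.submatrix r r) = Gmat (2 * s₁) (fun _ => -φ) :=
  reduced_geodesic_loop_general β p A B Φ₁ Φ₂ hΦ₁0 hΦ₁π hΦ₂0 hΦ₂π hexpX hexpA φ hφ s₁ s₂ hs₁ hs₂
    hs₁pos
end

section
/- Let φ ∈ (0,π), β > 2, let m ≥ 2 be an integer, and let ℓ₁, k₁, …, k_m ∈ ℤ be integers such that |φ + 2πk₁| ≥ |φ + 2πk₂| ≥ … ≥ |φ + 2πk_m|. Assume further that k₁ = −ℓ₁ − 1 if ℓ₁ ≥ 0, and k₁ = −ℓ₁ if ℓ₁ < 0. Then the real number (1/(2β−1))·(φ/(2π)) + (2β/(2β−1))·ℓ₁ does not lie in the closed interval [min_{1≤j≤m} k_j, max_{1≤j≤m} k_j]. -/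
/-- If `φ ∈ (0,π)`, `β > 2`, `m ≥ 2`, and integers `ℓ₁, k₁, …, k_m` satisfy
`|φ + 2πk₁| ≥ … ≥ |φ + 2πk_m|` together with `k₁ = −ℓ₁ − 1` if `ℓ₁ ≥ 0` and `k₁ = −ℓ₁` if
`ℓ₁ < 0`, then `(1/(2β−1))·(φ/(2π)) + (2β/(2β−1))·ℓ₁ ∉ [min_j k_j, max_j k_j]`. -/
theorem convex_combination_impossible
    (φ : ℝ) (hφ0 : 0 < φ) (hφπ : φ < Real.pi)
    (β : ℝ) (hβ : 2 < β) (m : ℕ) (hm : 2 ≤ m)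
    (l₁ : ℤ) (k : Fin m → ℤ)
    (hsorted : ∀ i j : Fin m, i ≤ j →
      |φ + 2 * Real.pi * (k j : ℝ)| ≤ |φ + 2 * Real.pi * (k i : ℝ)|)
    (hk₁nonneg : 0 ≤ l₁ → k ⟨0, by omega⟩ = -l₁ - 1)
    (hk₁neg : l₁ < 0 → k ⟨0, by omega⟩ = -l₁) :
    (1 / (2 * β - 1)) * (φ / (2 * Real.pi)) + (2 * β / (2 * β - 1)) * (l₁ : ℝ) ∉
      Set.Icc
        ((Finset.univ.inf' ⟨⟨0, by omega⟩, Finset.mem_univ _⟩ k : ℤ) : ℝ)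
        ((Finset.univ.sup' ⟨⟨0, by omega⟩, Finset.mem_univ _⟩ k : ℤ) : ℝ) := by
  have hπ := Real.pi_pos
  have h2β : (0:ℝ) < 2 * β - 1 := by linarith
  set i0 : Fin m := ⟨0, by omega⟩ with hi0
  have hbound : ∀ i : Fin m, |φ + 2 * Real.pi * (k i : ℝ)| ≤ |φ + 2 * Real.pi * (k i0 : ℝ)| :=
    fun i => hsorted i0 i (by exact Fin.mk_le_of_le_val (Nat.zero_le _))
  have hxeq : (1 / (2 * β - 1)) * (φ / (2 * Real.pi)) + (2 * β / (2 * β - 1)) * (l₁ : ℝ)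
      = (φ / (2 * Real.pi) + 2 * β * l₁) / (2 * β - 1) := by ring
  rw [hxeq]
  intro hmem
  obtain ⟨h1, h2⟩ := hmem
  rcases le_or_gt 0 l₁ with hl | hl
  · -- k i0 = -l₁ - 1, all k i ≤ l₁, but x > l₁
    have hk1 := hk₁nonneg hl
    have habs : |φ + 2 * Real.pi * (k i0 : ℝ)| = 2 * Real.pi * (l₁ + 1) - φ := by
      rw [hk1]
      push_cast
      rw [abs_of_nonpos]
      · ring
      · have : (1:ℝ) ≤ (l₁:ℝ) + 1 := by exact_mod_cast by omega
        nlinarith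
    have hki : ∀ i : Fin m, k i ≤ l₁ := by
      intro i
      have h := hbound i
      rw [habs] at h
      have hle : φ + 2 * Real.pi * (k i : ℝ) ≤ 2 * Real.pi * (l₁ + 1) - φ :=
        (le_abs_self _).trans h
      have : (k i : ℝ) < (l₁ : ℝ) + 1 := by nlinarith
      have hlt : ((k i : ℤ) : ℝ) < ((l₁ + 1 : ℤ) : ℝ) := by push_cast; linarith
      have : k i < l₁ + 1 := by exact_mod_cast hlt
      omega
    have hsup : (Finset.univ.sup' ⟨i0, Finset.mem_univ _⟩ k) ≤ l₁ :=
      Finset.sup'_le _ _ fun i _ => hki i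
    have hsupR : ((Finset.univ.sup' ⟨i0, Finset.mem_univ _⟩ k : ℤ) : ℝ) ≤ (l₁ : ℝ) := by
      exact_mod_cast hsup
    have hxgt : (l₁ : ℝ) < (φ / (2 * Real.pi) + 2 * β * l₁) / (2 * β - 1) := by
      rw [lt_div_iff₀ h2β]
      have hφpos : 0 < φ / (2 * Real.pi) := by positivity
      have hl' : (0:ℝ) ≤ (l₁:ℝ) := by exact_mod_cast hl
      nlinarith
    linarith
  · -- k i0 = -l₁, all k i ≥ l₁, but x < l₁
    have hk1 := hk₁neg hl
    have habs : |φ + 2 * Real.pi * (k i0 : ℝ)| = φ - 2 * Real.pi * l₁ := by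
      rw [hk1]
      push_cast
      rw [abs_of_nonneg]
      · ring
      · have h1 : l₁ ≤ -1 := by omega
        have : (l₁:ℝ) ≤ -1 := by exact_mod_cast h1
        nlinarith
    have hki : ∀ i : Fin m, l₁ ≤ k i := by
      intro i
      have h := hbound i
      rw [habs] at h
      have hge : -(φ - 2 * Real.pi * l₁) ≤ φ + 2 * Real.pi * (k i : ℝ) := (abs_le.1 h).1
      have : (l₁ : ℝ) - 1 < (k i : ℝ) := by nlinarith
      have : l₁ - 1 < k i := by exact_mod_cast (show ((l₁-1:ℤ):ℝ) < (k i:ℝ) by push_cast; linarith)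
      omega
    have hinf : l₁ ≤ (Finset.univ.inf' ⟨i0, Finset.mem_univ _⟩ k) :=
      Finset.le_inf' _ _ fun i _ => hki i
    have hinfR : (l₁ : ℝ) ≤ ((Finset.univ.inf' ⟨i0, Finset.mem_univ _⟩ k : ℤ) : ℝ) := by
      exact_mod_cast hinf
    have hxlt : (φ / (2 * Real.pi) + 2 * β * l₁) / (2 * β - 1) < (l₁ : ℝ) := by
      rw [div_lt_iff₀ h2β]
      have hφlt : φ / (2 * Real.pi) < 1 / 2 := by
        rw [div_lt_div_iff₀ (by positivity) (by norm_num)]; linarith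
      have hl1 : l₁ ≤ -1 := by omega
      have hl' : (l₁:ℝ) ≤ -1 := by exact_mod_cast hl1
      nlinarith
    linarith
end
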